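/- arXiv:1207.1460 — 10 statements merged into one kernel-verified Lean document; each statement's English description precedes it below -/
import Mathlib

section
/- Let a ≤ b be integers and let p be a probability mass function on ℤ whose support is exactly the finite integer interval I = [a,b] ∩ ℤ (that is, p(k) > 0 for all k ∈ I and p(k) = 0 otherwise). Define ψ(k) = (p(k+1) − p(k))/p(k) for k ∈ I. If X is a random variable with probability mass function p, then for every function f : ℤ → ℝ with f(a−1) = 0 one has E[(f(X) − f(X−1)) + ψ(X) f(X)] = 0. -/
lemma telescope_Icc (a : ℤ) (g : ℤ → ℝ) :
    ∀ b, a ≤ b → ∑ k ∈ Finset.Icc a b, (g k - g (k - 1)) = g b - g (a - 1) := by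
  refine Int.le_induction ?_ ?_
  · simp
  · intro n hn ih
    have hins : Finset.Icc a (n + 1) = insert (n + 1) (Finset.Icc a n) := by
      ext x; simp [Finset.mem_Icc]; omega
    rw [hins, Finset.sum_insert (by simp), ih]
    have : n + 1 - 1 = n := by ring
    rw [this]
    ring

/-- For a pmf `p` on ℤ with support exactly the finite integer
interval `[a,b] ∩ ℤ`, with `ψ k = (p (k+1) - p k)/p k` on the support, and `X`
a random variable with pmf `p` (so that `E[g(X)] = ∑_{k=a}^b p k * g k`),
for every `f : ℤ → ℝ` with `f (a-1) = 0` one has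
`E[(f(X) - f(X-1)) + ψ(X) f(X)] = 0`. -/
theorem stmt_0 (a b : ℤ) (hab : a ≤ b) (p : ℤ → ℝ)
    (hpos : ∀ k ∈ Finset.Icc a b, 0 < p k)
    (hzero : ∀ k : ℤ, k ∉ Finset.Icc a b → p k = 0)
    (hsum : ∑ k ∈ Finset.Icc a b, p k = 1)
    (ψ : ℤ → ℝ) (hψ : ∀ k ∈ Finset.Icc a b, ψ k = (p (k + 1) - p k) / p k)
    (f : ℤ → ℝ) (hf : f (a - 1) = 0) :
    ∑ k ∈ Finset.Icc a b, p k * ((f k - f (k - 1)) + ψ k * f k) = 0 := by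
  have key : ∑ k ∈ Finset.Icc a b, p k * ((f k - f (k - 1)) + ψ k * f k)
      = ∑ k ∈ Finset.Icc a b, ((fun k => p (k + 1) * f k) k
        - (fun k => p (k + 1) * f k) (k - 1)) := by
    apply Finset.sum_congr rfl
    intro k hk
    have hpk := hpos k hk
    have hψk := hψ k hk
    simp only
    rw [hψk]
    have : k - 1 + 1 = k := by ring
    rw [this]
    field_simp
    ring
  rw [key, telescope_Icc a (fun k => p (k + 1) * f k) b hab]
  have h1 : p (b + 1) = 0 := hzero _ (by simp)
  have h2 : a - 1 + 1 = a := by ring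
  rw [h1, h2, hf]
  ring
end

section
/- Let a ≤ b be integers and let p be a probability mass function on ℤ whose support is exactly the finite integer interval I = [a,b] ∩ ℤ, and define ψ(k) = (p(k+1) − p(k))/p(k) for k ∈ I. If X is a random variable taking values in I such that E[(f(X) − f(X−1)) + ψ(X) f(X)] = 0 for every function f of the form f(k) = 1(k = ℓ) with ℓ ∈ I, then X has probability mass function p, i.e. P(X = k) = p(k) for all k ∈ I. -/
/-!
Testing the identity against the indicator of `ℓ` leaves only the terms `k = ℓ` and `k = ℓ + 1`,
which gives `q (ℓ + 1) = q ℓ (1 + ψ ℓ) = q ℓ p (ℓ + 1) / p ℓ` on `[a, b)`. Hence `q / p` is constant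
on `[a, b]`, and both being normalized forces the constant to be `1`.
-/

open Finset

theorem sum_mul_stein_indicator_eq (s : Finset ℤ) (q ψ : ℤ → ℝ) {ℓ : ℤ} (hℓ : ℓ ∈ s)
    (hℓ' : ℓ + 1 ∈ s) :
    ∑ k ∈ s, q k *
        (((if k = ℓ then (1 : ℝ) else 0) - (if k - 1 = ℓ then (1 : ℝ) else 0))
          + ψ k * (if k = ℓ then (1 : ℝ) else 0)) = q ℓ * (1 + ψ ℓ) - q (ℓ + 1) := by
  simp only [sub_eq_iff_eq_add, mul_add, mul_sub, mul_ite, mul_one, mul_zero, sum_add_distrib,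
    sum_sub_distrib, sum_ite_eq', if_pos hℓ, if_pos hℓ']
  ring

theorem mul_eq_mul_of_forall_mul_succ_eq {a b : ℤ} {p q : ℤ → ℝ}
    (hp : ∀ n ∈ Ico a b, p n ≠ 0) (hstep : ∀ n ∈ Ico a b, q (n + 1) * p n = q n * p (n + 1)) :
    ∀ k ∈ Icc a b, q k * p a = q a * p k := by
  intro k hk
  obtain ⟨hak, hkb⟩ := mem_Icc.mp hk
  induction k, hak using Int.leInduction with
  | base => ring
  | succ n han ih =>
    have hn : n ∈ Ico a b := mem_Ico.mpr ⟨han, by omega⟩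
    refine mul_right_cancel₀ (hp n hn) ?_
    calc q (n + 1) * p a * p n = q n * p a * p (n + 1) := by rw [mul_right_comm, hstep n hn]; ring
      _ = q a * p (n + 1) * p n := by rw [ih (mem_Icc.mpr ⟨han, by omega⟩) (by omega)]; ring

theorem eq_of_mul_eq_mul_of_sum_eq_one {α : Type*} {s : Finset α} {p q : α → ℝ} {c d : ℝ} (hc : c ≠ 0)
    (h : ∀ k ∈ s, q k * c = d * p k) (hp : ∑ k ∈ s, p k = 1) (hq : ∑ k ∈ s, q k = 1) :
    ∀ k ∈ s, q k = p k := by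
  have hcd : c = d := by
    simpa [← sum_mul, ← mul_sum, hp, hq] using sum_congr rfl h
  intro k hk
  exact mul_right_cancel₀ hc (by rw [h k hk, hcd, mul_comm])

theorem stmt_1_general (a b : ℤ) (p : ℤ → ℝ)
    (hpos : ∀ k ∈ Finset.Icc a b, 0 < p k)
    (hsum : ∑ k ∈ Finset.Icc a b, p k = 1)
    (ψ : ℤ → ℝ) (hψ : ∀ k ∈ Finset.Icc a b, ψ k = (p (k + 1) - p k) / p k)
    (q : ℤ → ℝ)
    (hqsum : ∑ k ∈ Finset.Icc a b, q k = 1)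
    (hE : ∀ ℓ ∈ Finset.Icc a b,
      ∑ k ∈ Finset.Icc a b, q k *
        (((if k = ℓ then (1 : ℝ) else 0) - (if k - 1 = ℓ then (1 : ℝ) else 0))
          + ψ k * (if k = ℓ then (1 : ℝ) else 0)) = 0) :
    ∀ k ∈ Finset.Icc a b, q k = p k := by
  intro k hk
  have hIco : ∀ {n}, n ∈ Ico a b → n ∈ Icc a b := fun hn => Ico_subset_Icc_self hn
  have hstep : ∀ n ∈ Ico a b, q (n + 1) * p n = q n * p (n + 1) := by
    intro n hn
    have hsucc : n + 1 ∈ Icc a b := by simp only [mem_Icc, mem_Ico] at hn ⊢; omega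
    have hrec := hE n (hIco hn)
    rw [sum_mul_stein_indicator_eq _ q ψ (hIco hn) hsucc, hψ n (hIco hn)] at hrec
    have hpn : p n ≠ 0 := (hpos n (hIco hn)).ne'
    field_simp at hrec
    linarith
  have ha : a ∈ Icc a b := left_mem_Icc.mpr ((mem_Icc.mp hk).1.trans (mem_Icc.mp hk).2)
  exact eq_of_mul_eq_mul_of_sum_eq_one (hpos a ha).ne'
    (mul_eq_mul_of_forall_mul_succ_eq (fun n hn => (hpos n (hIco hn)).ne') hstep) hsum hqsum k hk

/-- Converse characterization. If `p` is a pmf on ℤ with support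
exactly `[a,b] ∩ ℤ`, `ψ k = (p (k+1) - p k)/p k`, and `X` is a random variable
taking values in `[a,b] ∩ ℤ` (with law `q`) such that
`E[(f(X) - f(X-1)) + ψ(X) f(X)] = 0` for all indicator functions
`f = 1(· = ℓ)`, `ℓ ∈ [a,b] ∩ ℤ`, then `X` has pmf `p`. -/
theorem stmt_1 (a b : ℤ) (hab : a ≤ b) (p : ℤ → ℝ)
    (hpos : ∀ k ∈ Finset.Icc a b, 0 < p k)
    (hzero : ∀ k : ℤ, k ∉ Finset.Icc a b → p k = 0)
    (hsum : ∑ k ∈ Finset.Icc a b, p k = 1)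
    (ψ : ℤ → ℝ) (hψ : ∀ k ∈ Finset.Icc a b, ψ k = (p (k + 1) - p k) / p k)
    (q : ℤ → ℝ)
    (hqpos : ∀ k ∈ Finset.Icc a b, 0 ≤ q k)
    (hqzero : ∀ k : ℤ, k ∉ Finset.Icc a b → q k = 0)
    (hqsum : ∑ k ∈ Finset.Icc a b, q k = 1)
    (hE : ∀ ℓ ∈ Finset.Icc a b,
      ∑ k ∈ Finset.Icc a b, q k *
        (((if k = ℓ then (1 : ℝ) else 0) - (if k - 1 = ℓ then (1 : ℝ) else 0))
          + ψ k * (if k = ℓ then (1 : ℝ) else 0)) = 0) :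
    ∀ k ∈ Finset.Icc a b, q k = p k :=
  stmt_1_general a b p hpos hsum ψ hψ q hqsum hE
end

section
/- Let a ≤ b be integers, let p be a probability mass function on ℤ whose support is exactly the finite integer interval I = [a,b] ∩ ℤ, define ψ(k) = (p(k+1) − p(k))/p(k) for k ∈ I, and let c : [a−1,b] ∩ ℤ → ℝ \ {0} be any nowhere-zero function. Then a random variable X taking values in I has probability mass function p if and only if E[c(X−1)(f(X) − f(X−1)) + (c(X) ψ(X) + c(X) − c(X−1)) f(X)] = 0 for every function f : ℤ → ℝ with f(a−1) = 0. -/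
/-!
Summation by parts, using `f (a - 1) = 0` and `p (b + 1) = 0`, turns the Stein expression into
`∑_{a ≤ k < b} f k * c k * (q k * p (k + 1) / p k - q (k + 1))`. Testing with indicator functions
shows that it vanishes for all `f` iff `q / p` is constant on `[a, b]`, and since `q` and `p` both
have total mass one, the constant is `1`.
-/

open Finset

theorem forall_sum_mul_eq_zero_iff {α R : Type*} [DecidableEq α] [Semiring R] {s : Finset α}
    {x₀ : α} (hx₀ : x₀ ∉ s) (g : α → R) :
    (∀ f : α → R, f x₀ = 0 → ∑ k ∈ s, f k * g k = 0) ↔ ∀ k ∈ s, g k = 0 := by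
  refine ⟨fun h k hk => ?_, fun h f _ => sum_eq_zero fun k hk => by rw [h k hk, mul_zero]⟩
  have hk₀ : x₀ ≠ k := fun h => hx₀ (h ▸ hk)
  simpa [Pi.single_apply, hk₀, hk] using h (Pi.single k 1) (Pi.single_eq_of_ne hk₀ 1)

theorem sum_Icc_sub_eq_sum_Ico_sub_succ {M : Type*} [AddCommGroup M] {a b : ℤ} (hab : a ≤ b)
    (F G : ℤ → M) (hF : F b = 0) (hG : G a = 0) :
    ∑ k ∈ Icc a b, (F k - G k) = ∑ k ∈ Ico a b, (F k - G (k + 1)) := by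
  have hF' : ∑ k ∈ Icc a b, F k = ∑ k ∈ Icc a (b - 1), F k := by
    rw [← insert_Icc_sub_one_right_eq_Icc hab, sum_insert (by simp), hF, zero_add]
  have hG' : ∑ k ∈ Icc a b, G k = ∑ k ∈ Icc a (b - 1), G (k + 1) := by
    rw [← insert_Icc_add_one_left_eq_Icc hab, sum_insert (by simp), hG, zero_add,
      ← sub_add_cancel b 1, ← map_add_right_Icc, sum_map, add_sub_cancel_right]
    rfl
  rw [sum_sub_distrib, sum_sub_distrib, hF', hG', Icc_sub_one_right_eq_Ico]

theorem sum_stein_eq_sum_Ico {a b : ℤ} (hab : a ≤ b) {p q ψ c f : ℤ → ℝ}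
    (hp : ∀ k ∈ Icc a b, p k ≠ 0) (hpb : p (b + 1) = 0)
    (hψ : ∀ k ∈ Icc a b, ψ k = (p (k + 1) - p k) / p k) (hf : f (a - 1) = 0) :
    ∑ k ∈ Icc a b, q k * (c (k - 1) * (f k - f (k - 1)) + (c k * ψ k + c k - c (k - 1)) * f k)
      = ∑ k ∈ Ico a b, f k * (c k * (q k * p (k + 1) / p k - q (k + 1))) := by
  calc _ = ∑ k ∈ Icc a b, (f k * c k * q k * p (k + 1) / p k - q k * c (k - 1) * f (k - 1)) :=
        sum_congr rfl fun k hk => by rw [hψ k hk]; field_simp [hp k hk]; ring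
    _ = ∑ k ∈ Ico a b, (f k * c k * q k * p (k + 1) / p k - q (k + 1) * c k * f k) := by
        rw [sum_Icc_sub_eq_sum_Ico_sub_succ hab (fun k => f k * c k * q k * p (k + 1) / p k)
          (fun k => q k * c (k - 1) * f (k - 1)) (by simp [hpb]) (by simp [hf])]
        simp only [add_sub_cancel_right]
    _ = _ := sum_congr rfl fun k _ => by ring

theorem Int.eq_of_succ_eq_on_Icc {α : Type*} {g : ℤ → α} {a b : ℤ}
    (h : ∀ k ∈ Ico a b, g (k + 1) = g k) : ∀ k ∈ Icc a b, g k = g a := by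
  intro k hk
  obtain ⟨hak, hkb⟩ := mem_Icc.1 hk
  induction k, hak using Int.leInduction with
  | base => rfl
  | succ n hn ih => rw [h n (mem_Ico.2 ⟨hn, by omega⟩), ih (mem_Icc.2 ⟨hn, by omega⟩) (by omega)]

theorem eq_of_div_eq_const_of_sum_eq {ι K : Type*} [Field K] {s : Finset ι} {p q : ι → K} {r : K}
    (hp : ∀ k ∈ s, p k ≠ 0) (hr : ∀ k ∈ s, q k / p k = r)
    (hsum : ∑ k ∈ s, q k = ∑ k ∈ s, p k) (hne : ∑ k ∈ s, p k ≠ 0) :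
    ∀ k ∈ s, q k = p k := by
  have hq : ∀ k ∈ s, q k = r * p k := fun k hk => (div_eq_iff (hp k hk)).1 (hr k hk)
  have hr1 : r = 1 := by
    rw [sum_congr rfl hq, ← mul_sum] at hsum
    exact (mul_eq_right₀ hne).1 hsum
  intro k hk
  rw [hq k hk, hr1, one_mul]

theorem stmt_3_general (a b : ℤ) (hab : a ≤ b) (p : ℤ → ℝ)
    (hpos : ∀ k ∈ Finset.Icc a b, 0 < p k)
    (hzero : ∀ k : ℤ, k ∉ Finset.Icc a b → p k = 0)
    (hsum : ∑ k ∈ Finset.Icc a b, p k = 1)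
    (ψ : ℤ → ℝ) (hψ : ∀ k ∈ Finset.Icc a b, ψ k = (p (k + 1) - p k) / p k)
    (c : ℤ → ℝ) (hc : ∀ k ∈ Finset.Icc (a - 1) b, c k ≠ 0)
    (q : ℤ → ℝ)
    (hqsum : ∑ k ∈ Finset.Icc a b, q k = 1) :
    (∀ k ∈ Finset.Icc a b, q k = p k) ↔
      (∀ f : ℤ → ℝ, f (a - 1) = 0 →
        ∑ k ∈ Finset.Icc a b, q k *
          (c (k - 1) * (f k - f (k - 1))
            + (c k * ψ k + c k - c (k - 1)) * f k) = 0) := by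
  have hp : ∀ k ∈ Icc a b, p k ≠ 0 := fun k hk => (hpos k hk).ne'
  have hpb : p (b + 1) = 0 := hzero _ (by simp)
  simp_rw +contextual [sum_stein_eq_sum_Ico hab hp hpb hψ]
  rw [forall_sum_mul_eq_zero_iff (by simp)]
  have hmem : ∀ k ∈ Ico a b, k ∈ Icc a b ∧ k + 1 ∈ Icc a b ∧ c k ≠ 0 := fun k hk => by
    obtain ⟨hak, hkb⟩ := mem_Ico.1 hk
    exact ⟨mem_Icc.2 ⟨hak, hkb.le⟩, mem_Icc.2 ⟨by omega, hkb⟩, hc k (mem_Icc.2 ⟨by omega, hkb.le⟩)⟩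
  constructor
  · intro hqp k hk
    obtain ⟨hk₀, hk₁, -⟩ := hmem k hk
    rw [hqp k hk₀, hqp _ hk₁, mul_div_right_comm, div_self (hp k hk₀), one_mul, sub_self, mul_zero]
  · intro h
    refine eq_of_div_eq_const_of_sum_eq hp (Int.eq_of_succ_eq_on_Icc fun k hk => ?_)
      (hqsum.trans hsum.symm) (hsum ▸ one_ne_zero)
    obtain ⟨hk₀, hk₁, hck⟩ := hmem k hk
    have hrec := sub_eq_zero.1 ((mul_eq_zero.1 (h k hk)).resolve_left hck)
    rw [div_eq_div_iff (hp _ hk₁) (hp _ hk₀), ← hrec]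
    field_simp [hp k hk₀]

/-- Let `p` be a pmf on ℤ with support exactly `[a,b] ∩ ℤ`,
`ψ k = (p (k+1) - p k)/p k`, and let `c` be nowhere zero on `[a-1,b] ∩ ℤ`.
Then a random variable `X` taking values in `[a,b] ∩ ℤ` (with law `q`) has
pmf `p` if and only if
`E[c(X-1)(f(X) - f(X-1)) + (c(X)ψ(X) + c(X) - c(X-1)) f(X)] = 0`
for every `f : ℤ → ℝ` with `f (a-1) = 0`. -/
theorem stmt_3 (a b : ℤ) (hab : a ≤ b) (p : ℤ → ℝ)
    (hpos : ∀ k ∈ Finset.Icc a b, 0 < p k)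
    (hzero : ∀ k : ℤ, k ∉ Finset.Icc a b → p k = 0)
    (hsum : ∑ k ∈ Finset.Icc a b, p k = 1)
    (ψ : ℤ → ℝ) (hψ : ∀ k ∈ Finset.Icc a b, ψ k = (p (k + 1) - p k) / p k)
    (c : ℤ → ℝ) (hc : ∀ k ∈ Finset.Icc (a - 1) b, c k ≠ 0)
    (q : ℤ → ℝ)
    (hqpos : ∀ k ∈ Finset.Icc a b, 0 ≤ q k)
    (hqzero : ∀ k : ℤ, k ∉ Finset.Icc a b → q k = 0)
    (hqsum : ∑ k ∈ Finset.Icc a b, q k = 1) :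
    (∀ k ∈ Finset.Icc a b, q k = p k) ↔
      (∀ f : ℤ → ℝ, f (a - 1) = 0 →
        ∑ k ∈ Finset.Icc a b, q k *
          (c (k - 1) * (f k - f (k - 1))
            + (c k * ψ k + c k - c (k - 1)) * f k) = 0) :=
  stmt_3_general a b hab p hpos hzero hsum ψ hψ c hc q hqsum
end

section
/- Let α ≥ 1, β ≥ 1 and m ≥ 1 be integers and n ≥ 0, and let S be a random variable with the Pólya–Eggenberger urn mass function p(k) = C(n,k) (α/m)_k (β/m)_{n−k} / (α/m + β/m)_n for 0 ≤ k ≤ n. Then for every function f : ℤ → ℝ with f(−1) = 0, E[ S(β/m + n − S)(f(S) − f(S−1)) + ((n − S)(α/m + S) − S(β/m + n − S)) f(S) ] = 0. -/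
/-- The rising factorial `(x)_k = x (x+1) ⋯ (x+k-1)`, with `(x)_0 = 1`. -/
noncomputable def risingFac (x : ℝ) : ℕ → ℝ
  | 0 => 1
  | k + 1 => risingFac x k * (x + k)

/-- The Pólya–Eggenberger urn mass function
`p n k = C(n,k) (α/m)_k (β/m)_{n-k} / (α/m + β/m)_n` on `{0,1,…,n}`. -/
noncomputable def urnPmf (α β m n k : ℕ) : ℝ :=
  (n.choose k : ℝ) * risingFac ((α : ℝ) / m) k * risingFac ((β : ℝ) / m) (n - k)
    / risingFac ((α : ℝ) / m + (β : ℝ) / m) n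

lemma urn_key (α β m n k : ℕ) (hk : k < n) :
    urnPmf α β m n (k + 1) * (((k : ℝ) + 1) * ((β : ℝ) / m + n - ((k : ℝ) + 1)))
      = urnPmf α β m n k * (((n : ℝ) - k) * ((α : ℝ) / m + k)) := by
  unfold urnPmf
  have h1 : n - (k + 1) + 1 = n - k := by omega
  have h2 : risingFac ((β : ℝ) / m) (n - k)
      = risingFac ((β : ℝ) / m) (n - (k + 1)) * ((β : ℝ) / m + (n - (k + 1) : ℕ)) := by
    rw [← h1]; rfl
  have h3 : ((n - (k + 1) : ℕ) : ℝ) = (n : ℝ) - ((k : ℝ) + 1) := by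
    push_cast [Nat.cast_sub (by omega : k + 1 ≤ n)]; ring
  have h4 : (n.choose (k + 1) : ℝ) * ((k : ℝ) + 1) = (n.choose k : ℝ) * ((n : ℝ) - k) := by
    have h5 : ((n.choose (k+1) * (k+1) : ℕ) : ℝ) = ((n.choose k * (n - k) : ℕ) : ℝ) := by
      rw [Nat.choose_succ_right_eq]
    push_cast [Nat.cast_sub hk.le] at h5
    linarith
  rw [h2, h3]
  show (n.choose (k+1) : ℝ) * (risingFac ((α:ℝ)/m) k * ((α:ℝ)/m + k)) * _ / _ * _ = _
  linear_combination (risingFac ((α:ℝ)/m) k * ((α:ℝ)/m + (k:ℝ)) *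
    risingFac ((β:ℝ)/m) (n-(k+1)) * ((β:ℝ)/m + ((n:ℝ) - ((k:ℝ)+1))) /
    risingFac ((α:ℝ)/m + (β:ℝ)/m) n) * h4

/-- If `S` has the Pólya–Eggenberger urn mass function, then for
every `f : ℤ → ℝ` with `f (-1) = 0`,
`E[S(β/m + n - S)(f(S) - f(S-1)) + ((n-S)(α/m + S) - S(β/m + n - S)) f(S)] = 0`. -/
theorem stmt_5 (α β m : ℕ) (hα : 1 ≤ α) (hβ : 1 ≤ β) (hm : 1 ≤ m) (n : ℕ)
    (f : ℤ → ℝ) (hf : f (-1) = 0) :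
    ∑ k ∈ Finset.range (n + 1), urnPmf α β m n k *
      ((k : ℝ) * ((β : ℝ) / m + (n : ℝ) - (k : ℝ)) * (f k - f ((k : ℤ) - 1))
        + (((n : ℝ) - (k : ℝ)) * ((α : ℝ) / m + (k : ℝ))
            - (k : ℝ) * ((β : ℝ) / m + (n : ℝ) - (k : ℝ))) * f k) = 0 := by
  have split : ∀ k ∈ Finset.range (n + 1), urnPmf α β m n k *
      ((k : ℝ) * ((β : ℝ) / m + (n : ℝ) - (k : ℝ)) * (f k - f ((k : ℤ) - 1))
        + (((n : ℝ) - (k : ℝ)) * ((α : ℝ) / m + (k : ℝ))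
            - (k : ℝ) * ((β : ℝ) / m + (n : ℝ) - (k : ℝ))) * f k)
      = urnPmf α β m n k * (((n : ℝ) - k) * ((α : ℝ) / m + k)) * f k
        - urnPmf α β m n k * ((k : ℝ) * ((β : ℝ) / m + n - k)) * f ((k : ℤ) - 1) := by
    intro k _; ring
  rw [Finset.sum_congr rfl split, Finset.sum_sub_distrib]
  have hA : ∑ k ∈ Finset.range (n + 1),
      urnPmf α β m n k * (((n : ℝ) - k) * ((α : ℝ) / m + k)) * f k
      = ∑ k ∈ Finset.range n,
        urnPmf α β m n k * (((n : ℝ) - k) * ((α : ℝ) / m + k)) * f k := by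
    rw [Finset.sum_range_succ]; simp
  have hB : ∑ k ∈ Finset.range (n + 1),
      urnPmf α β m n k * ((k : ℝ) * ((β : ℝ) / m + n - k)) * f ((k : ℤ) - 1)
      = ∑ k ∈ Finset.range n,
        urnPmf α β m n k * (((n : ℝ) - k) * ((α : ℝ) / m + k)) * f k := by
    rw [Finset.sum_range_succ']
    simp only [Nat.cast_zero, zero_mul, mul_zero, zero_sub, hf, add_zero]
    refine Finset.sum_congr rfl fun k hk => ?_
    have hk' := Finset.mem_range.mp hk
    have key := urn_key α β m n k hk'
    rw [show ((k + 1 : ℕ) : ℤ) - 1 = (k : ℤ) by push_cast; ring,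
        show ((k + 1 : ℕ) : ℝ) = (k : ℝ) + 1 by push_cast; ring, key]
  rw [hA, hB, sub_self]
end

section
/- Let α ≥ 1, β ≥ 1 and m ≥ 1 be integers and n ≥ 0. If a random variable S taking values in {0,1,…,n} satisfies E[ S(β/m + n − S)(f(S) − f(S−1)) + ((n − S)(α/m + S) − S(β/m + n − S)) f(S) ] = 0 for every function f : ℤ → ℝ with f(−1) = 0, then S has the Pólya–Eggenberger urn mass function, i.e. P(S = k) = C(n,k) (α/m)_k (β/m)_{n−k} / (α/m + β/m)_n for all 0 ≤ k ≤ n. -/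
lemma risingFac_pos {x : ℝ} (hx : 0 < x) : ∀ k, 0 < risingFac x k
  | 0 => by simp [risingFac]
  | k + 1 => by
    have h1 := risingFac_pos hx k
    have h2 : (0:ℝ) < x + k := by positivity
    simpa [risingFac] using mul_pos h1 h2

lemma risingFac_vandermonde (a b : ℝ) : ∀ n : ℕ,
    ∑ k ∈ Finset.range (n+1),
      (n.choose k : ℝ) * risingFac a k * risingFac b (n - k) = risingFac (a + b) n
  | 0 => by simp [risingFac]
  | n + 1 => by
    have IH := risingFac_vandermonde a b n
    rw [Finset.sum_range_succ']
    have e1 : ∀ k ∈ Finset.range (n+1),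
        (((n+1).choose (k+1) : ℝ)) * risingFac a (k+1) * risingFac b (n+1 - (k+1))
        = (n.choose k : ℝ) * risingFac a k * risingFac b (n-k) * (a + k)
          + (n.choose (k+1) : ℝ) * risingFac a (k+1) * risingFac b (n-k) := by
      intro k hk
      have h : n + 1 - (k+1) = n - k := by omega
      rw [h, Nat.choose_succ_succ]
      push_cast
      simp only [risingFac]
      ring
    rw [Finset.sum_congr rfl e1, Finset.sum_add_distrib]
    have e2 : (∑ k ∈ Finset.range (n+1),
          (n.choose (k+1) : ℝ) * risingFac a (k+1) * risingFac b (n-k))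
        + ((n+1).choose 0 : ℝ) * risingFac a 0 * risingFac b (n+1-0)
        = ∑ k ∈ Finset.range (n+1),
            (n.choose k : ℝ) * risingFac a k * risingFac b (n-k) * (b + (n:ℝ) - k) := by
      symm
      rw [Finset.sum_range_succ']
      rw [Finset.sum_range_succ
        (fun k => (n.choose (k+1) : ℝ) * risingFac a (k+1) * risingFac b (n-k)) n]
      have hz : (n.choose (n+1) : ℝ) * risingFac a (n+1) * risingFac b (n-n) = 0 := by
        simp [Nat.choose_succ_self]
      have hs : ∑ k ∈ Finset.range n,
            (n.choose (k+1) : ℝ) * risingFac a (k+1) * risingFac b (n-(k+1))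
              * (b + (n:ℝ) - ((k:ℝ)+1))
          = ∑ k ∈ Finset.range n,
            (n.choose (k+1) : ℝ) * risingFac a (k+1) * risingFac b (n-k) := by
        apply Finset.sum_congr rfl
        intro k hk
        have hk' : k < n := Finset.mem_range.mp hk
        have h1 : n - (k+1) + 1 = n - k := by omega
        have h2 : risingFac b (n-k) = risingFac b (n-(k+1)) * (b + ((n:ℝ) - ((k:ℝ)+1))) := by
          rw [← h1]
          simp only [risingFac]
          congr 1
          have : ((n - (k+1) : ℕ) : ℝ) = (n:ℝ) - ((k:ℝ)+1) := by
            push_cast [Nat.cast_sub (by omega : k + 1 ≤ n)]; ring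
          rw [this]
        rw [h2]; ring
      have hc : (n.choose 0 : ℝ) * risingFac a 0 * risingFac b (n - 0) * (b + (n:ℝ) - 0)
          = risingFac b (n+1) := by
        simp only [risingFac, Nat.choose_zero_right, Nat.sub_zero]
        push_cast; ring
      have hc2 : (((n+1)).choose 0 : ℝ) * risingFac a 0 * risingFac b (n+1)
          = risingFac b (n+1) := by
        rw [show risingFac a 0 = 1 from rfl]; norm_num
      push_cast at hs hc ⊢
      rw [hs]
      linarith [hz, hc, hc2]
    rw [add_assoc, e2, ← Finset.sum_add_distrib]
    have e3 : ∀ k ∈ Finset.range (n+1),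
        (n.choose k : ℝ) * risingFac a k * risingFac b (n-k) * (a + k)
          + (n.choose k : ℝ) * risingFac a k * risingFac b (n-k) * (b + (n:ℝ) - k)
        = ((n.choose k : ℝ) * risingFac a k * risingFac b (n-k)) * ((a + b) + n) := by
      intro k hk; ring
    rw [Finset.sum_congr rfl e3, ← Finset.sum_mul, IH]
    simp only [risingFac]

/-- indicator of `{j}` -/
noncomputable def ind (j : ℤ) : ℤ → ℝ := fun z => if z = j then 1 else 0

lemma urn_rec (α β m n j : ℕ) (hj : j < n) :
    urnPmf α β m n (j+1) * (((j:ℝ)+1) * ((β:ℝ)/m + n - ((j:ℝ)+1)))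
      = urnPmf α β m n j * (((n:ℝ) - j) * ((α:ℝ)/m + j)) := by
  unfold urnPmf
  rw [div_mul_eq_mul_div, div_mul_eq_mul_div]
  congr 1
  have h1 : risingFac ((α:ℝ)/m) (j+1) = risingFac ((α:ℝ)/m) j * ((α:ℝ)/m + j) := rfl
  have h2 : risingFac ((β:ℝ)/m) (n-j)
      = risingFac ((β:ℝ)/m) (n-(j+1)) * ((β:ℝ)/m + ((n:ℝ) - ((j:ℝ)+1))) := by
    have he : n - j = (n - (j+1)) + 1 := by omega
    rw [he]
    simp only [risingFac]
    congr 1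
    have : ((n - (j+1) : ℕ) : ℝ) = (n:ℝ) - ((j:ℝ)+1) := by
      push_cast [Nat.cast_sub (by omega : j + 1 ≤ n)]; ring
    rw [this]
  have h3 : ((n.choose (j+1) : ℝ)) * ((j:ℝ)+1) = (n.choose j : ℝ) * ((n:ℝ) - j) := by
    have := congrArg (Nat.cast : ℕ → ℝ) (Nat.choose_succ_right_eq n j)
    push_cast [Nat.cast_sub hj.le] at this
    linarith
  rw [h1, h2]
  linear_combination (risingFac ((α:ℝ)/m) j * risingFac ((β:ℝ)/m) (n-(j+1))
    * ((α:ℝ)/m + j) * ((β:ℝ)/m + (n:ℝ) - (j:ℝ) - 1)) * h3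

/-- If a random variable `S` taking values in `{0,1,…,n}` (with
law `q`) satisfies
`E[S(β/m + n - S)(f(S) - f(S-1)) + ((n-S)(α/m + S) - S(β/m + n - S)) f(S)] = 0`
for every `f : ℤ → ℝ` with `f (-1) = 0`, then `S` has the Pólya–Eggenberger
urn mass function. -/
theorem stmt_6 (α β m : ℕ) (hα : 1 ≤ α) (hβ : 1 ≤ β) (hm : 1 ≤ m) (n : ℕ)
    (q : ℕ → ℝ)
    (hqpos : ∀ k ∈ Finset.range (n + 1), 0 ≤ q k)
    (hqsum : ∑ k ∈ Finset.range (n + 1), q k = 1)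
    (hE : ∀ f : ℤ → ℝ, f (-1) = 0 →
      ∑ k ∈ Finset.range (n + 1), q k *
        ((k : ℝ) * ((β : ℝ) / m + (n : ℝ) - (k : ℝ)) * (f k - f ((k : ℤ) - 1))
          + (((n : ℝ) - (k : ℝ)) * ((α : ℝ) / m + (k : ℝ))
              - (k : ℝ) * ((β : ℝ) / m + (n : ℝ) - (k : ℝ))) * f k) = 0) :
    ∀ k ∈ Finset.range (n + 1), q k = urnPmf α β m n k := by
  have ha : (0:ℝ) < (α:ℝ)/m := by
    apply div_pos <;> exact_mod_cast Nat.lt_of_lt_of_le Nat.zero_lt_one ‹_›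
  have hb : (0:ℝ) < (β:ℝ)/m := by
    apply div_pos <;> exact_mod_cast Nat.lt_of_lt_of_le Nat.zero_lt_one ‹_›
  have hD : (0:ℝ) < risingFac ((α:ℝ)/m + (β:ℝ)/m) n := risingFac_pos (by linarith) n
  -- recurrence for q
  have hrec : ∀ j, j < n →
      q (j+1) * (((j:ℝ)+1) * ((β:ℝ)/m + n - ((j:ℝ)+1)))
        = q j * (((n:ℝ) - j) * ((α:ℝ)/m + j)) := by
    intro j hj
    have h := hE (ind (j:ℤ)) (by
      unfold ind; rw [if_neg (by omega)])
    have hsplit : ∀ k ∈ Finset.range (n+1), q k *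
        ((k : ℝ) * ((β : ℝ) / m + (n : ℝ) - (k : ℝ))
            * (ind (j:ℤ) k - ind (j:ℤ) ((k : ℤ) - 1))
          + (((n : ℝ) - (k : ℝ)) * ((α : ℝ) / m + (k : ℝ))
              - (k : ℝ) * ((β : ℝ) / m + (n : ℝ) - (k : ℝ))) * ind (j:ℤ) k)
        = (if k = j then q j * (((n:ℝ) - j) * ((α:ℝ)/m + j)) else 0)
          + (if k = j+1 then
              -(q (j+1) * (((j:ℝ)+1) * ((β:ℝ)/m + n - ((j:ℝ)+1)))) else 0) := by
      intro k hk
      unfold ind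
      by_cases h1 : k = j
      · subst h1
        rw [if_pos rfl, if_neg (by omega : ¬((k:ℤ) - 1 = (k:ℤ))), if_pos rfl,
          if_neg (by omega : ¬(k = k + 1))]
        ring
      · by_cases h2 : k = j + 1
        · subst h2
          rw [if_neg (show ¬(((j+1:ℕ):ℤ) = (j:ℤ)) by omega),
            if_pos (show (((j+1:ℕ):ℤ) - 1 = (j:ℤ)) by push_cast; ring),
            if_neg h1, if_pos rfl]
          push_cast
          ring
        · rw [if_neg (by omega : ¬((k:ℤ) = (j:ℤ))),
            if_neg (by omega : ¬((k:ℤ) - 1 = (j:ℤ))), if_neg h1, if_neg h2]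
          ring
    rw [Finset.sum_congr rfl hsplit, Finset.sum_add_distrib,
      Finset.sum_ite_eq' (Finset.range (n+1)) j,
      Finset.sum_ite_eq' (Finset.range (n+1)) (j+1),
      if_pos (Finset.mem_range.mpr (by omega)),
      if_pos (Finset.mem_range.mpr (by omega))] at h
    linarith
  -- q is proportional to urnPmf
  have key : ∀ k, k ≤ n → q k * urnPmf α β m n 0 = q 0 * urnPmf α β m n k := by
    intro k
    induction k with
    | zero => intro _; ring
    | succ k ih =>
      intro hk1
      have hk : k < n := hk1
      have ih' := ih (by omega)
      have hcpos : (0:ℝ) < ((k:ℝ)+1) * ((β:ℝ)/m + n - ((k:ℝ)+1)) := by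
        have hkn : ((k:ℝ)+1) ≤ (n:ℝ) := by exact_mod_cast hk1
        have : (0:ℝ) < (k:ℝ)+1 := by positivity
        nlinarith
      have H1 := hrec k hk
      have H2 := urn_rec α β m n k hk
      exact mul_right_cancel₀ hcpos.ne'
        (by linear_combination (urnPmf α β m n 0) * H1 - q 0 * H2
          + (((n:ℝ) - k) * ((α:ℝ)/m + k)) * ih')
  -- the pmf sums to 1
  have hpsum : ∑ k ∈ Finset.range (n+1), urnPmf α β m n k = 1 := by
    unfold urnPmf
    rw [← Finset.sum_div, risingFac_vandermonde, div_self hD.ne']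
  -- conclude q 0 = p 0
  have hq0 : q 0 = urnPmf α β m n 0 := by
    have hsum2 : ∑ k ∈ Finset.range (n+1), q k * urnPmf α β m n 0
        = ∑ k ∈ Finset.range (n+1), q 0 * urnPmf α β m n k :=
      Finset.sum_congr rfl (fun k hk =>
        key k (Nat.lt_succ_iff.mp (Finset.mem_range.mp hk)))
    rw [← Finset.sum_mul, ← Finset.mul_sum, hqsum, hpsum, one_mul, mul_one] at hsum2
    exact hsum2.symm
  intro k hk
  have hp0 : (0:ℝ) < urnPmf α β m n 0 := by
    unfold urnPmf
    simp only [Nat.choose_zero_right, Nat.sub_zero, Nat.cast_one]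
    have h1 := risingFac_pos hb n
    rw [show risingFac ((α:ℝ)/m) 0 = 1 from rfl]
    positivity
  have hkey := key k (Nat.lt_succ_iff.mp (Finset.mem_range.mp hk))
  rw [hq0] at hkey
  exact mul_right_cancel₀ hp0.ne' (by linarith)
end

section
/- Let α ≥ 1, β ≥ 1 and m ≥ 1 be integers, let a, b, n be nonnegative integers with n ≥ a + b, and write p_n^{α,β,m}(k) = C(n,k) (α/m)_k (β/m)_{n−k} / (α/m + β/m)_n. Then for every integer k with a ≤ k ≤ n − b, [k]_a [n−k]_b · p_n^{α,β,m}(k) = ( [n]_{a+b} (α/m)_a (β/m)_b / (α/m + β/m)_{a+b} ) · p_{n−a−b}^{α+am, β+bm, m}(k − a), where [x]_k = x(x−1)⋯(x−k+1) is the falling factorial. -/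
/-- The falling factorial `[x]_k = x (x-1) ⋯ (x-k+1)`, with `[x]_0 = 1`. -/
noncomputable def fallingFac (x : ℝ) : ℕ → ℝ
  | 0 => 1
  | k + 1 => fallingFac x k * (x - k)

lemma risingFac_add (x : ℝ) (s t : ℕ) :
    risingFac x (s + t) = risingFac x s * risingFac (x + s) t := by
  induction t with
  | zero => simp [risingFac]
  | succ t ih =>
    rw [show s + (t + 1) = (s + t) + 1 from rfl, risingFac, ih, risingFac]
    push_cast
    ring

lemma fallingFac_natCast (k : ℕ) : ∀ a : ℕ, fallingFac (k : ℝ) a = (k.descFactorial a : ℝ) := by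
  intro a
  induction a with
  | zero => simp [fallingFac]
  | succ a ih =>
    rw [fallingFac, ih, Nat.descFactorial_succ]
    by_cases h : a ≤ k
    · push_cast [h]
      ring
    · rw [Nat.descFactorial_of_lt (show k < a by omega)]
      simp

lemma key_nat (a b t s : ℕ) :
    (a + t).descFactorial a * (b + s).descFactorial b * (a + b + t + s).choose (a + t)
      = (a + b + t + s).descFactorial (a + b) * (t + s).choose t := by
  have h1 : Nat.factorial t * (a + t).descFactorial a = Nat.factorial (a + t) := by
    have := Nat.factorial_mul_descFactorial (n := a + t) (k := a) (by omega)
    rwa [show a + t - a = t by omega] at this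
  have h2 : Nat.factorial s * (b + s).descFactorial b = Nat.factorial (b + s) := by
    have := Nat.factorial_mul_descFactorial (n := b + s) (k := b) (by omega)
    rwa [show b + s - b = s by omega] at this
  have h3 : Nat.factorial (t + s) * (a + b + t + s).descFactorial (a + b)
      = Nat.factorial (a + b + t + s) := by
    have := Nat.factorial_mul_descFactorial (n := a + b + t + s) (k := a + b) (by omega)
    rwa [show a + b + t + s - (a + b) = t + s by omega] at this
  have h4 : (a + b + t + s).choose (a + t) * Nat.factorial (a + t) * Nat.factorial (b + s)
      = Nat.factorial (a + b + t + s) := by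
    have := Nat.choose_mul_factorial_mul_factorial (n := a + b + t + s) (k := a + t) (by omega)
    rwa [show a + b + t + s - (a + t) = b + s by omega] at this
  have h5 : (t + s).choose t * Nat.factorial t * Nat.factorial s = Nat.factorial (t + s) := by
    have := Nat.choose_mul_factorial_mul_factorial (n := t + s) (k := t) (by omega)
    rwa [show t + s - t = s by omega] at this
  have hpos : 0 < Nat.factorial t * Nat.factorial s :=
    Nat.mul_pos t.factorial_pos s.factorial_pos
  apply Nat.eq_of_mul_eq_mul_right hpos
  calc (a + t).descFactorial a * (b + s).descFactorial b * (a + b + t + s).choose (a + t)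
        * (Nat.factorial t * Nat.factorial s)
      = (a + b + t + s).choose (a + t) * (Nat.factorial t * (a + t).descFactorial a)
          * (Nat.factorial s * (b + s).descFactorial b) := by ring
    _ = (a + b + t + s).choose (a + t) * Nat.factorial (a + t) * Nat.factorial (b + s) := by
        rw [h1, h2]
    _ = Nat.factorial (a + b + t + s) := h4
    _ = Nat.factorial (t + s) * (a + b + t + s).descFactorial (a + b) := h3.symm
    _ = ((t + s).choose t * Nat.factorial t * Nat.factorial s)
          * (a + b + t + s).descFactorial (a + b) := by rw [h5]
    _ = (a + b + t + s).descFactorial (a + b) * (t + s).choose t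
          * (Nat.factorial t * Nat.factorial s) := by ring

/-- For integers `α, β, m ≥ 1` and nonnegative integers
`a, b, n` with `n ≥ a + b`, for every integer `k` with `a ≤ k ≤ n - b`,
`[k]_a [n-k]_b p_n^{α,β,m}(k)
  = ([n]_{a+b} (α/m)_a (β/m)_b / (α/m + β/m)_{a+b}) p_{n-a-b}^{α+am,β+bm,m}(k-a)`. -/
theorem stmt_8 (α β m : ℕ) (hα : 1 ≤ α) (hβ : 1 ≤ β) (hm : 1 ≤ m)
    (a b n : ℕ) (hn : a + b ≤ n)
    (k : ℕ) (hka : a ≤ k) (hkb : k ≤ n - b) :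
    fallingFac (k : ℝ) a * fallingFac ((n : ℝ) - (k : ℝ)) b * urnPmf α β m n k
      = (fallingFac (n : ℝ) (a + b) * risingFac ((α : ℝ) / m) a
            * risingFac ((β : ℝ) / m) b
            / risingFac ((α : ℝ) / m + (β : ℝ) / m) (a + b))
          * urnPmf (α + a * m) (β + b * m) m (n - a - b) (k - a) := by
  have hm0 : (m : ℝ) ≠ 0 := by positivity
  obtain ⟨t, rfl⟩ : ∃ t, k = a + t := ⟨k - a, by omega⟩
  obtain ⟨s, rfl⟩ : ∃ s, n = a + b + t + s := ⟨n - (a + b + t), by omega⟩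
  have e1 : a + b + t + s - (a + t) = b + s := by omega
  have e2 : a + b + t + s - a - b = t + s := by omega
  have e3 : a + t - a = t := by omega
  have e4 : t + s - t = s := by omega
  have hα' : ((α + a * m : ℕ) : ℝ) / m = (α : ℝ) / m + a := by
    push_cast; field_simp
  have hβ' : ((β + b * m : ℕ) : ℝ) / m = (β : ℝ) / m + b := by
    push_cast; field_simp
  have hcast : ((a + b + t + s : ℕ) : ℝ) - ((a + t : ℕ) : ℝ) = ((b + s : ℕ) : ℝ) := by
    push_cast; ring
  have harg : ((α : ℝ) / m + (a : ℝ) + ((β : ℝ) / m + (b : ℝ)))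
      = ((α : ℝ) / m + (β : ℝ) / m) + ((a + b : ℕ) : ℝ) := by push_cast; ring
  have hden : risingFac ((α : ℝ) / m + (β : ℝ) / m) (a + b + t + s)
      = risingFac ((α : ℝ) / m + (β : ℝ) / m) (a + b)
        * risingFac ((α : ℝ) / m + (β : ℝ) / m + ((a + b : ℕ) : ℝ)) (t + s) := by
    rw [show a + b + t + s = (a + b) + (t + s) by omega]
    exact risingFac_add _ _ _
  rw [urnPmf, urnPmf, e1, e2, e3, e4, hα', hβ', hcast,
    fallingFac_natCast, fallingFac_natCast, fallingFac_natCast, harg, hden,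
    risingFac_add ((α : ℝ) / m) a t, risingFac_add ((β : ℝ) / m) b s]
  have hkey : ((a + t).descFactorial a : ℝ) * ((b + s).descFactorial b : ℝ)
      * ((a + b + t + s).choose (a + t) : ℝ)
      = ((a + b + t + s).descFactorial (a + b) : ℝ) * ((t + s).choose t : ℝ) := by
    exact_mod_cast congrArg (Nat.cast : ℕ → ℝ) (key_nat a b t s)
  set Ra := risingFac ((α : ℝ) / m) a
  set Rat := risingFac ((α : ℝ) / m + a) t
  set Rb := risingFac ((β : ℝ) / m) b
  set Rbs := risingFac ((β : ℝ) / m + b) s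
  set RS := risingFac ((α : ℝ) / m + (β : ℝ) / m) (a + b)
  set RS2 := risingFac ((α : ℝ) / m + (β : ℝ) / m + ((a + b : ℕ) : ℝ)) (t + s)
  simp only [div_eq_mul_inv, mul_inv]
  linear_combination (Ra * Rat * Rb * Rbs * RS⁻¹ * RS2⁻¹) * hkey
end

section
/- Let α > 0 and β > 0, let h : [0,1] → ℝ be continuous, let Bh = E h(Z) for Z with the Beta distribution B(α,β), and define f(w) = w^{−α}(1−w)^{−β} ∫₀^w u^{α−1}(1−u)^{β−1}(h(u) − Bh) du for w ∈ (0,1). Then f is differentiable on (0,1) and satisfies the Stein equation w(1−w) f'(w) + (α(1−w) − βw) f(w) = h(w) − Bh for all w ∈ (0,1); moreover, if h is Lipschitz then f is bounded on (0,1), and any bounded differentiable function g : (0,1) → ℝ satisfying w(1−w) g'(w) + (α(1−w) − βw) g(w) = h(w) − Bh for all w ∈ (0,1) equals f on (0,1). -/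
/-!
With the integrating factor `m(x) = x^α (1-x)^β` one has
`(m g)' = x^(α-1) (1-x)^(β-1) (x(1-x) g' + (α(1-x) - βx) g)`, so the Stein equation reads
`(m g)' = x^(α-1) (1-x)^(β-1) (h - Bh)`. Its solution `f` is therefore `m⁻¹` times the integral
of the right-hand side from `0`, and two bounded solutions differ by `c / m`, which is bounded
near `0` only when `c = 0`.

`f` is bounded near `0` because the integral up to `w` is `O(w^α)`. Near `1` we use that
`h - Bh` has mean zero under `B(α,β)` (by the Beta integral), so the integral up to `w` is
minus the integral over `[w, 1]`; the substitution `u ↦ 1 - u` turns this into the situation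
near `0` with `α` and `β` exchanged.
-/

open MeasureTheory intervalIntegral

/-- Expectation `E h(Z)` for `Z ∼ B(a,b)`, the Beta distribution with density
`x^{a-1} (1-x)^{b-1} / B(a,b)` on `[0,1]`, where `B(a,b) = Γ(a)Γ(b)/Γ(a+b)`. -/
noncomputable def betaExp (a b : ℝ) (h : ℝ → ℝ) : ℝ :=
  ∫ x in Set.Ioo (0 : ℝ) 1,
    (Real.Gamma (a + b) / (Real.Gamma a * Real.Gamma b))
      * x ^ (a - 1) * (1 - x) ^ (b - 1) * h x

open Set Filter Topology

noncomputable def betaWeight (α β u : ℝ) : ℝ := u ^ (α - 1) * (1 - u) ^ (β - 1)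

noncomputable def steinSolution (α β : ℝ) (k : ℝ → ℝ) (w : ℝ) : ℝ :=
  w ^ (-α) * (1 - w) ^ (-β) * ∫ u in (0 : ℝ)..w, betaWeight α β u * k u

variable {α β : ℝ}

lemma betaWeight_pos {w : ℝ} (hw : w ∈ Ioo (0 : ℝ) 1) : 0 < betaWeight α β w :=
  mul_pos (Real.rpow_pos_of_pos hw.1 _) (Real.rpow_pos_of_pos (sub_pos.2 hw.2) _)

lemma betaWeight_one_sub (u : ℝ) : betaWeight β α (1 - u) = betaWeight α β u := by
  rw [betaWeight, betaWeight, sub_sub_cancel, mul_comm]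

lemma continuousOn_betaWeight : ContinuousOn (betaWeight α β) (Ioo 0 1) := by
  refine ContinuousOn.mul (continuousOn_id.rpow_const fun u hu => Or.inl hu.1.ne') ?_
  exact (continuousOn_const.sub continuousOn_id).rpow_const
    fun u hu => Or.inl (sub_ne_zero.2 hu.2.ne')

lemma intervalIntegrable_betaWeight_mul_of_lt_one (hα : 0 < α) {k : ℝ → ℝ} {b : ℝ}
    (hb₀ : 0 ≤ b) (hb₁ : b < 1) (hk : ContinuousOn k (Icc 0 b)) :
    IntervalIntegrable (fun u => betaWeight α β u * k u) volume 0 b := by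
  have hsing : IntervalIntegrable (fun u : ℝ => u ^ (α - 1)) volume 0 b :=
    intervalIntegrable_rpow' (by linarith)
  have hreg : ContinuousOn (fun u => (1 - u) ^ (β - 1) * k u) (uIcc 0 b) := by
    rw [uIcc_of_le hb₀]
    exact ((continuousOn_const.sub continuousOn_id).rpow_const
      fun u hu => Or.inl (sub_ne_zero.2 (hu.2.trans_lt hb₁).ne')).mul hk
  simpa only [betaWeight, mul_assoc] using hsing.mul_continuousOn hreg

lemma intervalIntegrable_betaWeight_mul (hα : 0 < α) (hβ : 0 < β) {k : ℝ → ℝ}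
    (hk : ContinuousOn k (Icc 0 1)) :
    IntervalIntegrable (fun u => betaWeight α β u * k u) volume 0 1 := by
  have hleft := intervalIntegrable_betaWeight_mul_of_lt_one (β := β) hα (b := 1 / 2)
    (by norm_num) (by norm_num) (hk.mono (Icc_subset_Icc le_rfl (by norm_num)))
  have hright := (intervalIntegrable_betaWeight_mul_of_lt_one (β := α) hβ (b := 1 / 2)
    (k := fun v => k (1 - v)) (by norm_num) (by norm_num)
    (hk.comp (continuousOn_const.sub continuousOn_id)
      fun v hv => ⟨by linarith [hv.2], by linarith [hv.1]⟩)).comp_sub_left 1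
  simp only [betaWeight_one_sub, sub_sub_cancel] at hright
  exact hleft.trans (by norm_num at hright ⊢; exact hright.symm)

theorem integral_betaWeight (hα : 0 < α) (hβ : 0 < β) :
    ∫ u in (0 : ℝ)..1, betaWeight α β u = ProbabilityTheory.beta α β := by
  have hcomplex :
      Complex.betaIntegral α β = ((∫ u in (0 : ℝ)..1, betaWeight α β u : ℝ) : ℂ) := by
    rw [Complex.betaIntegral, ← integral_ofReal]
    refine integral_congr fun u hu => ?_
    rw [uIcc_of_le zero_le_one] at hu
    simp only [betaWeight, Complex.ofReal_mul, Complex.ofReal_cpow hu.1,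
      Complex.ofReal_cpow (sub_nonneg.2 hu.2)]
    push_cast
    ring
  rw [ProbabilityTheory.beta_eq_betaIntegralReal α β hα hβ, hcomplex, Complex.ofReal_re]

lemma betaExp_eq_integral_div_beta (h : ℝ → ℝ) :
    betaExp α β h =
      (∫ u in (0 : ℝ)..1, betaWeight α β u * h u) / ProbabilityTheory.beta α β := by
  rw [betaExp, ← integral_Ioc_eq_integral_Ioo, ← integral_of_le zero_le_one,
    ← intervalIntegral.integral_div]
  refine integral_congr fun u _ => ?_
  rw [ProbabilityTheory.beta, betaWeight, ← one_div_div]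
  ring

lemma integral_betaWeight_mul_sub_betaExp (hα : 0 < α) (hβ : 0 < β) {h : ℝ → ℝ}
    (hh : ContinuousOn h (Icc 0 1)) :
    ∫ u in (0 : ℝ)..1, betaWeight α β u * (h u - betaExp α β h) = 0 := by
  simp_rw [mul_sub]
  rw [integral_sub (intervalIntegrable_betaWeight_mul hα hβ hh)
    (intervalIntegrable_betaWeight_mul hα hβ continuousOn_const),
    intervalIntegral.integral_mul_const, integral_betaWeight hα hβ, betaExp_eq_integral_div_beta,
    mul_div_cancel₀ _ (ProbabilityTheory.beta_pos hα hβ).ne', sub_self]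

lemma hasDerivAt_rpow_mul_one_sub_rpow_mul {g : ℝ → ℝ} {d w : ℝ}
    (hw : w ∈ Ioo (0 : ℝ) 1) (hg : HasDerivAt g d w) :
    HasDerivAt (fun x => x ^ α * (1 - x) ^ β * g x)
      (betaWeight α β w * (w * (1 - w) * d + (α * (1 - w) - β * w) * g w)) w := by
  have hw₀ : w ≠ 0 := hw.1.ne'
  have hw₁ : 1 - w ≠ 0 := sub_ne_zero.2 hw.2.ne'
  have hA := Real.hasDerivAt_rpow_const (p := α) (Or.inl hw₀)
  have hB := ((hasDerivAt_id' w).const_sub 1).rpow_const (p := β) (Or.inl hw₁)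
  refine ((hA.mul hB).mul hg).congr_deriv ?_
  rw [betaWeight, Pi.mul_apply, Real.rpow_sub_one hw₀, Real.rpow_sub_one hw₁]
  field_simp
  ring

lemma exists_hasDerivAt_steinSolution (hα : 0 < α) {k : ℝ → ℝ}
    (hk : ContinuousOn k (Icc 0 1)) {w : ℝ} (hw : w ∈ Ioo (0 : ℝ) 1) :
    ∃ d, HasDerivAt (steinSolution α β k) d w ∧
      w * (1 - w) * d + (α * (1 - w) - β * w) * steinSolution α β k w = k w := by
  have hnhds : Ioo (0 : ℝ) 1 ∈ 𝓝 w := isOpen_Ioo.mem_nhds hw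
  have hcont : ContinuousOn (fun u => betaWeight α β u * k u) (Ioo 0 1) :=
    continuousOn_betaWeight.mul (hk.mono Ioo_subset_Icc_self)
  have hI : HasDerivAt (fun x => ∫ u in (0 : ℝ)..x, betaWeight α β u * k u)
      (betaWeight α β w * k w) w :=
    integral_hasDerivAt_right
      (intervalIntegrable_betaWeight_mul_of_lt_one hα hw.1.le hw.2
        (hk.mono (Icc_subset_Icc le_rfl hw.2.le)))
      (hcont.stronglyMeasurableAtFilter isOpen_Ioo w hw) (hcont.continuousAt hnhds)
  have hdiff : DifferentiableAt ℝ (steinSolution α β k) w :=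
    ((differentiableAt_id.rpow_const (Or.inl hw.1.ne')).mul
      ((differentiableAt_const 1 |>.sub differentiableAt_id).rpow_const
        (Or.inl (sub_ne_zero.2 hw.2.ne')))).mul hI.differentiableAt
  refine ⟨_, hdiff.hasDerivAt,
    mul_left_cancel₀ (betaWeight_pos (α := α) (β := β) hw).ne' ?_⟩
  have hprod : (fun x => x ^ α * (1 - x) ^ β * steinSolution α β k x) =ᶠ[𝓝 w]
      fun x => ∫ u in (0 : ℝ)..x, betaWeight α β u * k u := by
    filter_upwards [hnhds] with x hx
    rw [steinSolution, Real.rpow_neg hx.1.le, Real.rpow_neg (sub_pos.2 hx.2).le]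
    field_simp [(Real.rpow_pos_of_pos hx.1 α).ne', (Real.rpow_pos_of_pos (sub_pos.2 hx.2) β).ne']
  exact (hasDerivAt_rpow_mul_one_sub_rpow_mul hw hdiff.hasDerivAt).unique
    (hI.congr_of_eventuallyEq hprod)

lemma exists_bound_steinSolution_of_le_half (hα : 0 < α) {k : ℝ → ℝ}
    (hk : ContinuousOn k (Icc 0 1)) :
    ∃ C, ∀ w ∈ Ioc (0 : ℝ) (1 / 2), |steinSolution α β k w| ≤ C := by
  have hsub : Icc (0 : ℝ) (1 / 2) ⊆ Icc 0 1 := Icc_subset_Icc le_rfl (by norm_num)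
  have hne : ∀ u ∈ Icc (0 : ℝ) (1 / 2), 1 - u ≠ 0 := fun u hu => by linarith [hu.2]
  obtain ⟨M, hM⟩ := isCompact_Icc.exists_bound_of_continuousOn
    (((continuousOn_const.sub continuousOn_id).rpow_const (p := β - 1)
      fun u hu => Or.inl (hne u hu)).mul (hk.mono hsub))
  obtain ⟨B, hB⟩ := isCompact_Icc.exists_bound_of_continuousOn
    ((continuousOn_const.sub continuousOn_id).rpow_const (p := -β)
      fun u hu => Or.inl (hne u hu))
  refine ⟨B * M / α, fun w hw => ?_⟩
  have hw' : w ∈ Icc (0 : ℝ) (1 / 2) := Ioc_subset_Icc_self hw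
  have hint : |∫ u in (0 : ℝ)..w, betaWeight α β u * k u| ≤ M * (w ^ α / α) := by
    calc |∫ u in (0 : ℝ)..w, betaWeight α β u * k u|
        ≤ ∫ u in (0 : ℝ)..w, M * u ^ (α - 1) := by
          rw [← Real.norm_eq_abs]
          refine norm_integral_le_of_norm_le hw.1.le (ae_of_all _ fun u hu => ?_)
            ((intervalIntegrable_rpow' (r := α - 1) (by linarith)).const_mul M)
          have hM' := hM u ⟨hu.1.le, hu.2.trans hw'.2⟩
          rw [Real.norm_eq_abs, betaWeight, mul_assoc, abs_mul,
            abs_of_pos (Real.rpow_pos_of_pos hu.1 _), mul_comm M]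
          exact mul_le_mul_of_nonneg_left hM' (Real.rpow_pos_of_pos hu.1 _).le
      _ = M * (w ^ α / α) := by
          rw [intervalIntegral.integral_const_mul, integral_rpow (Or.inl (by linarith)),
            sub_add_cancel, Real.zero_rpow hα.ne', sub_zero]
  have hB' : |(1 - w) ^ (-β)| ≤ B := hB w hw'
  calc |steinSolution α β k w|
      = w ^ (-α) * (|(1 - w) ^ (-β)| * |∫ u in (0 : ℝ)..w, betaWeight α β u * k u|) := by
        rw [steinSolution, abs_mul, abs_mul, abs_of_pos (Real.rpow_pos_of_pos hw.1 _), mul_assoc]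
    _ ≤ w ^ (-α) * (B * (M * (w ^ α / α))) :=
        mul_le_mul_of_nonneg_left (mul_le_mul hB' hint (abs_nonneg _) ((abs_nonneg _).trans hB'))
          (Real.rpow_pos_of_pos hw.1 _).le
    _ = B * M / α := by
        rw [Real.rpow_neg hw.1.le]
        field_simp [(Real.rpow_pos_of_pos hw.1 α).ne']

lemma integral_betaWeight_mul_one_sub (k : ℝ → ℝ) (w : ℝ) :
    ∫ u in w..1, betaWeight α β u * k u =
      ∫ v in (0 : ℝ)..(1 - w), betaWeight β α v * k (1 - v) := by
  have := integral_comp_sub_left (a := w) (b := 1) (fun v => betaWeight β α v * k (1 - v)) 1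
  simpa only [sub_self, sub_sub_cancel, betaWeight_one_sub] using this

lemma steinSolution_eq_neg_one_sub (hα : 0 < α) (hβ : 0 < β) {k : ℝ → ℝ}
    (hk : ContinuousOn k (Icc 0 1)) (hk₀ : ∫ u in (0 : ℝ)..1, betaWeight α β u * k u = 0)
    {w : ℝ} (hw : w ∈ Icc (0 : ℝ) 1) :
    steinSolution α β k w = -steinSolution β α (fun v => k (1 - v)) (1 - w) := by
  have hint := intervalIntegrable_betaWeight_mul hα hβ hk
  have hsplit := integral_interval_sub_left hint
    (hint.mono_set (by
      rw [uIcc_of_le hw.1, uIcc_of_le zero_le_one]; exact Icc_subset_Icc le_rfl hw.2))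
  rw [hk₀, zero_sub, integral_betaWeight_mul_one_sub] at hsplit
  rw [steinSolution, steinSolution, sub_sub_cancel, ← hsplit]
  ring

lemma exists_bound_steinSolution (hα : 0 < α) (hβ : 0 < β) {k : ℝ → ℝ}
    (hk : ContinuousOn k (Icc 0 1)) (hk₀ : ∫ u in (0 : ℝ)..1, betaWeight α β u * k u = 0) :
    ∃ C, ∀ w ∈ Ioo (0 : ℝ) 1, |steinSolution α β k w| ≤ C := by
  obtain ⟨C₁, hC₁⟩ := exists_bound_steinSolution_of_le_half (β := β) hα hk
  obtain ⟨C₂, hC₂⟩ :=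
    exists_bound_steinSolution_of_le_half (β := α) hβ (k := fun v => k (1 - v))
    (hk.comp (continuousOn_const.sub continuousOn_id)
      fun v hv => ⟨by linarith [hv.2], by linarith [hv.1]⟩)
  refine ⟨max C₁ C₂, fun w hw => ?_⟩
  rcases le_or_gt w (1 / 2) with hw' | hw'
  · exact (hC₁ w ⟨hw.1, hw'⟩).trans (le_max_left _ _)
  · rw [steinSolution_eq_neg_one_sub hα hβ hk hk₀ (Ioo_subset_Icc_self hw), abs_neg]
    exact (hC₂ (1 - w) ⟨by linarith [hw.2], by linarith⟩).trans (le_max_right _ _)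

lemma eqOn_zero_of_bounded_of_stein_eq_zero (hα : 0 < α) {g : ℝ → ℝ}
    (hbdd : ∃ C, ∀ w ∈ Ioo (0 : ℝ) 1, |g w| ≤ C)
    (hg : ∀ w ∈ Ioo (0 : ℝ) 1, ∃ d, HasDerivAt g d w ∧
      w * (1 - w) * d + (α * (1 - w) - β * w) * g w = 0) :
    ∀ w ∈ Ioo (0 : ℝ) 1, g w = 0 := by
  obtain ⟨C, hC⟩ := hbdd
  set m : ℝ → ℝ := fun x => x ^ α * (1 - x) ^ β
  have hm_pos : ∀ x ∈ Ioo (0 : ℝ) 1, 0 < m x := fun x hx =>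
    mul_pos (Real.rpow_pos_of_pos hx.1 _) (Real.rpow_pos_of_pos (sub_pos.2 hx.2) _)
  have hderiv : ∀ w ∈ Ioo (0 : ℝ) 1, HasDerivAt (fun x => m x * g x) 0 w := fun w hw => by
    obtain ⟨d, hd, hstein⟩ := hg w hw
    simpa [hstein] using hasDerivAt_rpow_mul_one_sub_rpow_mul (α := α) (β := β) hw hd
  obtain ⟨c, hc⟩ := isOpen_Ioo.exists_is_const_of_deriv_eq_zero isPreconnected_Ioo
    (fun w hw => (hderiv w hw).differentiableAt.differentiableWithinAt)
    (fun w hw => (hderiv w hw).deriv)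
  have hm : Tendsto (fun x => C * m x) (𝓝[>] 0) (𝓝 0) := by
    have hcont : ContinuousAt (fun x => C * m x) 0 :=
      continuousAt_const.mul ((Real.continuousAt_rpow_const 0 α (Or.inr hα.le)).mul
        ((continuousAt_const.sub continuousAt_id).rpow_const (Or.inl (by norm_num))))
    simpa [m, Real.zero_rpow hα.ne'] using hcont.tendsto.mono_left nhdsWithin_le_nhds
  have hnear : Ioo (0 : ℝ) 1 ∈ 𝓝[>] 0 := Ioo_mem_nhdsGT zero_lt_one
  have hlim : Tendsto (fun x => m x * g x) (𝓝[>] 0) (𝓝 0) := by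
    refine squeeze_zero_norm' ?_ hm
    filter_upwards [hnear] with x hx
    rw [Real.norm_eq_abs, abs_mul, abs_of_pos (hm_pos x hx), mul_comm]
    exact mul_le_mul_of_nonneg_right (hC x hx) (hm_pos x hx).le
  have hc₀ : c = 0 :=
    tendsto_nhds_unique
      (tendsto_const_nhds.congr' (eventually_of_mem hnear fun x hx => (hc x hx).symm)) hlim
  exact fun w hw => (mul_eq_zero.1 ((hc w hw).trans hc₀)).resolve_left (hm_pos w hw).ne'

lemma eqOn_of_bounded_of_stein_eq (hα : 0 < α) {r f g : ℝ → ℝ}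
    (hfb : ∃ C, ∀ w ∈ Ioo (0 : ℝ) 1, |f w| ≤ C)
    (hgb : ∃ C, ∀ w ∈ Ioo (0 : ℝ) 1, |g w| ≤ C)
    (hf : ∀ w ∈ Ioo (0 : ℝ) 1, ∃ d, HasDerivAt f d w ∧
      w * (1 - w) * d + (α * (1 - w) - β * w) * f w = r w)
    (hg : ∀ w ∈ Ioo (0 : ℝ) 1, ∃ d, HasDerivAt g d w ∧
      w * (1 - w) * d + (α * (1 - w) - β * w) * g w = r w) :
    ∀ w ∈ Ioo (0 : ℝ) 1, g w = f w := by
  obtain ⟨Cf, hCf⟩ := hfb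
  obtain ⟨Cg, hCg⟩ := hgb
  have hdiff := eqOn_zero_of_bounded_of_stein_eq_zero (β := β) hα (g := fun x => g x - f x)
    ⟨Cg + Cf, fun w hw => (abs_sub _ _).trans (add_le_add (hCg w hw) (hCf w hw))⟩
    fun w hw => by
      obtain ⟨df, hdf, hsf⟩ := hf w hw
      obtain ⟨dg, hdg, hsg⟩ := hg w hw
      exact ⟨dg - df, hdg.sub hdf, by linear_combination hsg - hsf⟩
  exact fun w hw => sub_eq_zero.1 (hdiff w hw)

/-- For `α, β > 0`, `h` continuous on `[0,1]`, `Bh = E h(Z)` for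
`Z ∼ B(α,β)`, the function
`f(w) = w^{-α} (1-w)^{-β} ∫₀^w u^{α-1} (1-u)^{β-1} (h(u) - Bh) du`
is differentiable on `(0,1)` and solves the Stein equation
`w(1-w) f'(w) + (α(1-w) - βw) f(w) = h(w) - Bh` there; moreover, if `h` is
Lipschitz then `f` is bounded on `(0,1)` and every bounded differentiable
solution of the Stein equation on `(0,1)` equals `f` there. -/
theorem stmt_12 (α β : ℝ) (hα : 0 < α) (hβ : 0 < β)
    (h : ℝ → ℝ) (hcont : ContinuousOn h (Set.Icc 0 1))
    (Bh : ℝ) (hBh : Bh = betaExp α β h)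
    (f : ℝ → ℝ)
    (hfdef : ∀ w ∈ Set.Ioo (0 : ℝ) 1,
      f w = w ^ (-α) * (1 - w) ^ (-β)
        * ∫ u in (0 : ℝ)..w, u ^ (α - 1) * (1 - u) ^ (β - 1) * (h u - Bh)) :
    (∀ w ∈ Set.Ioo (0 : ℝ) 1, ∃ d : ℝ, HasDerivAt f d w ∧
        w * (1 - w) * d + (α * (1 - w) - β * w) * f w = h w - Bh) ∧
    ((∃ L : ℝ, ∀ x ∈ Set.Icc (0 : ℝ) 1, ∀ y ∈ Set.Icc (0 : ℝ) 1,
        |h x - h y| ≤ L * |x - y|) →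
      ((∃ C : ℝ, ∀ w ∈ Set.Ioo (0 : ℝ) 1, |f w| ≤ C) ∧
       (∀ g : ℝ → ℝ, (∃ C : ℝ, ∀ w ∈ Set.Ioo (0 : ℝ) 1, |g w| ≤ C) →
         (∀ w ∈ Set.Ioo (0 : ℝ) 1, ∃ d : ℝ, HasDerivAt g d w ∧
           w * (1 - w) * d + (α * (1 - w) - β * w) * g w = h w - Bh) →
         ∀ w ∈ Set.Ioo (0 : ℝ) 1, g w = f w))) := by
  have hk : ContinuousOn (fun u => h u - Bh) (Icc 0 1) := hcont.sub continuousOn_const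
  have hf : EqOn f (steinSolution α β fun u => h u - Bh) (Ioo 0 1) := hfdef
  have hsol : ∀ w ∈ Ioo (0 : ℝ) 1, ∃ d, HasDerivAt f d w ∧
      w * (1 - w) * d + (α * (1 - w) - β * w) * f w = h w - Bh := fun w hw => by
    obtain ⟨d, hd, hstein⟩ := exists_hasDerivAt_steinSolution hα hk hw
    exact ⟨d, hd.congr_of_eventuallyEq (eventually_of_mem (isOpen_Ioo.mem_nhds hw) hf),
      hf hw ▸ hstein⟩
  have hbdd : ∃ C, ∀ w ∈ Ioo (0 : ℝ) 1, |f w| ≤ C := by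
    obtain ⟨C, hC⟩ := exists_bound_steinSolution hα hβ hk
      (hBh ▸ integral_betaWeight_mul_sub_betaExp hα hβ hcont)
    exact ⟨C, fun w hw => hf hw ▸ hC w hw⟩
  exact ⟨hsol, fun _ =>
    ⟨hbdd, fun g hgb hg => eqOn_of_bounded_of_stein_eq hα hbdd hgb hsol hg⟩⟩
end

section
/- Let α > 0 and β > 0, let h : [0,1] → ℝ be Lipschitz with constant L, let Bh = E h(Z) for Z with the Beta distribution B(α,β), and let f(w) = w^{−α}(1−w)^{−β} ∫₀^w u^{α−1}(1−u)^{β−1}(h(u) − Bh) du for w ∈ (0,1). Then sup_{w ∈ (0,1)} |f(w)| ≤ 2L/(α+β). -/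
/-!
Let `q(u) = u^{α-1}(1-u)^{β-1}`, `B = ∫₀¹ q`, and `g = h - Bh`, so that `∫₀¹ q g = 0`.
Then `I(w) = ∫₀^w q g = -∫_w^1 q g`; combining the two expressions with weights
`∫_w^1 q` and `∫₀^w q` lets one replace `g(u)` by `g(u) - g(w)` in both, and the Lipschitz
bound `|g(u) - g(w)| ≤ L |u - w|` gives `B |I(w)| ≤ L (∫₀^w q · ∫₀¹ u q - B ∫₀^w u q)`.
For the Beta weight `∫₀¹ u q = α/(α+β) · B`, and `α ∫₀^w q - (α+β) ∫₀^w u q = w^α (1-w)^β`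
because `q(u)(α - (α+β)u)` is the derivative of `u^α (1-u)^β`. Hence
`|I(w)| ≤ L w^α (1-w)^β / (α+β)`, that is `|f| ≤ L/(α+β)`.
-/

open MeasureTheory intervalIntegral

open Set

section WeightedLipschitz

variable {q g : ℝ → ℝ} {L : ℝ}

lemma abs_integral_mul_sub_const_mul_le {a b w : ℝ} (hab : a ≤ b)
    (hq0 : ∀ u ∈ Icc a b, 0 ≤ q u) (hq : IntervalIntegrable q volume a b)
    (hqg : IntervalIntegrable (fun u => q u * g u) volume a b)
    (hg : ∀ u ∈ Icc a b, |g u - g w| ≤ L * |u - w|) :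
    |(∫ u in a..b, q u * g u) - g w * ∫ u in a..b, q u|
      ≤ L * ∫ u in a..b, q u * |u - w| := by
  rw [← intervalIntegral.integral_const_mul, ← intervalIntegral.integral_const_mul,
    ← intervalIntegral.integral_sub hqg (hq.const_mul _), ← Real.norm_eq_abs]
  refine norm_integral_le_of_norm_le hab (ae_of_all _ fun u hu => ?_)
    ((hq.mul_continuousOn (g := fun u => |u - w|) (by fun_prop)).const_mul _)
  have hu : u ∈ Icc a b := Ioc_subset_Icc_self hu
  rw [Real.norm_eq_abs, mul_comm (g w), ← mul_sub, abs_mul, abs_of_nonneg (hq0 u hu),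
    mul_left_comm]
  exact mul_le_mul_of_nonneg_left (hg u hu) (hq0 u hu)

lemma continuousOn_of_abs_sub_le {s : Set ℝ}
    (hg : ∀ x ∈ s, ∀ y ∈ s, |g x - g y| ≤ L * |x - y|) :
    ContinuousOn g s :=
  (LipschitzOnWith.of_dist_le' (K := L) (by simpa only [Real.dist_eq] using hg)).continuousOn

theorem integral_mul_abs_integral_mul_le
    (hq0 : ∀ u ∈ Icc (0:ℝ) 1, 0 ≤ q u) (hq : IntervalIntegrable q volume 0 1)
    (hg : ∀ x ∈ Icc (0:ℝ) 1, ∀ y ∈ Icc (0:ℝ) 1, |g x - g y| ≤ L * |x - y|)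
    (hmean : ∫ u in (0:ℝ)..1, q u * g u = 0) {w : ℝ} (hw : w ∈ Icc (0:ℝ) 1) :
    (∫ u in (0:ℝ)..1, q u) * |∫ u in (0:ℝ)..w, q u * g u|
      ≤ L * ((∫ u in (0:ℝ)..w, q u) * (∫ u in (0:ℝ)..1, u * q u)
        - (∫ u in (0:ℝ)..1, q u) * ∫ u in (0:ℝ)..w, u * q u) := by
  have hw' : w ∈ uIcc (0:ℝ) 1 := by rwa [uIcc_of_le zero_le_one]
  have hqg : IntervalIntegrable (fun u => q u * g u) volume 0 1 :=
    hq.mul_continuousOn (by rw [uIcc_of_le zero_le_one]; exact continuousOn_of_abs_sub_le hg)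
  have hqu : IntervalIntegrable (fun u => u * q u) volume 0 1 :=
    hq.continuousOn_mul continuousOn_id
  have left {F : ℝ → ℝ} (hF : IntervalIntegrable F volume 0 1) :
      IntervalIntegrable F volume 0 w := hF.mono_set (uIcc_subset_uIcc_left hw')
  have right {F : ℝ → ℝ} (hF : IntervalIntegrable F volume 0 1) :
      IntervalIntegrable F volume w 1 := hF.mono_set (uIcc_subset_uIcc_right hw')
  have hdist₀ : ∫ u in (0:ℝ)..w, q u * |u - w|
      = w * (∫ u in (0:ℝ)..w, q u) - ∫ u in (0:ℝ)..w, u * q u := by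
    rw [← intervalIntegral.integral_const_mul,
      ← intervalIntegral.integral_sub ((left hq).const_mul w) (left hqu)]
    refine integral_congr fun u hu => ?_
    rw [uIcc_of_le hw.1] at hu
    simp only [abs_of_nonpos (sub_nonpos.2 hu.2)]
    ring
  have hdist₁ : ∫ u in w..1, q u * |u - w|
      = (∫ u in w..1, u * q u) - w * ∫ u in w..1, q u := by
    rw [← intervalIntegral.integral_const_mul,
      ← intervalIntegral.integral_sub (right hqu) ((right hq).const_mul w)]
    refine integral_congr fun u hu => ?_
    rw [uIcc_of_le hw.2] at hu
    simp only [abs_of_nonneg (sub_nonneg.2 hu.1)]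
    ring
  have hleft := abs_integral_mul_sub_const_mul_le hw.1
    (fun u hu => hq0 u ⟨hu.1, hu.2.trans hw.2⟩) (left hq) (left hqg)
    (fun u hu => hg u ⟨hu.1, hu.2.trans hw.2⟩ w hw)
  have hright := abs_integral_mul_sub_const_mul_le hw.2
    (fun u hu => hq0 u ⟨hw.1.trans hu.1, hu.2⟩) (right hq) (right hqg)
    (fun u hu => hg u ⟨hw.1.trans hu.1, hu.2⟩ w hw)
  rw [hdist₀] at hleft
  rw [hdist₁] at hright
  have hT : 0 ≤ ∫ u in w..1, q u :=
    integral_nonneg hw.2 fun u hu => hq0 u ⟨hw.1.trans hu.1, hu.2⟩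
  have hQ : 0 ≤ ∫ u in (0:ℝ)..w, q u :=
    integral_nonneg hw.1 fun u hu => hq0 u ⟨hu.1, hu.2.trans hw.2⟩
  rw [← integral_add_adjacent_intervals (left hq) (right hq),
    ← integral_add_adjacent_intervals (left hqu) (right hqu)]
  rw [← integral_add_adjacent_intervals (left hqg) (right hqg)] at hmean
  set Q := ∫ u in (0:ℝ)..w, q u
  set T := ∫ u in w..1, q u
  set I := ∫ u in (0:ℝ)..w, q u * g u
  set J := ∫ u in w..1, q u * g u
  -- `I = -J`, so `(Q + T) I` splits into the two local deviations from `g w`.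
  have hsplit : (Q + T) * I = T * (I - g w * Q) - Q * (J - g w * T) := by
    linear_combination Q * hmean
  calc (Q + T) * |I| = |T * (I - g w * Q) - Q * (J - g w * T)| := by
        rw [← hsplit, abs_mul, abs_of_nonneg (add_nonneg hQ hT)]
    _ ≤ T * |I - g w * Q| + Q * |J - g w * T| := by
        refine (abs_sub _ _).trans_eq ?_
        rw [abs_mul, abs_mul, abs_of_nonneg hQ, abs_of_nonneg hT]
    _ ≤ T * (L * (w * Q - _)) + Q * (L * (_ - w * T)) := by gcongr
    _ = _ := by ring

end WeightedLipschitz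

noncomputable def betaKernel (a b x : ℝ) : ℝ := x ^ (a - 1) * (1 - x) ^ (b - 1)

namespace betaKernel

variable {a b : ℝ}

lemma nonneg {x : ℝ} (hx : x ∈ Icc (0:ℝ) 1) : 0 ≤ betaKernel a b x :=
  mul_nonneg (Real.rpow_nonneg hx.1 _) (Real.rpow_nonneg (sub_nonneg.2 hx.2) _)

lemma ofReal_eq_cpow {x : ℝ} (hx : x ∈ Icc (0:ℝ) 1) :
    (betaKernel a b x : ℂ) = (x : ℂ) ^ ((a : ℂ) - 1) * (1 - (x : ℂ)) ^ ((b : ℂ) - 1) := by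
  rw [betaKernel, Complex.ofReal_mul, Complex.ofReal_cpow hx.1,
    Complex.ofReal_cpow (sub_nonneg.2 hx.2)]
  push_cast
  rfl

lemma intervalIntegrable (ha : 0 < a) (hb : 0 < b) :
    IntervalIntegrable (betaKernel a b) volume 0 1 := by
  have hc := Complex.betaIntegral_convergent (u := a) (v := b) (by simpa) (by simpa)
  rw [intervalIntegrable_iff_integrableOn_Ioc_of_le zero_le_one] at hc ⊢
  refine IntegrableOn.congr_fun hc.re (fun x hx => ?_) measurableSet_Ioc
  rw [← ofReal_eq_cpow (Ioc_subset_Icc_self hx)]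
  exact Complex.ofReal_re _

lemma integral_eq (ha : 0 < a) (hb : 0 < b) :
    ∫ x in (0:ℝ)..1, betaKernel a b x = Real.Gamma a * Real.Gamma b / Real.Gamma (a + b) := by
  have hΓ : Complex.Gamma ((a : ℂ) + b) ≠ 0 :=
    Complex.Gamma_ne_zero_of_re_pos (by simp; positivity)
  have hB : ((∫ x in (0:ℝ)..1, betaKernel a b x : ℝ) : ℂ) = Complex.betaIntegral a b := by
    rw [← intervalIntegral.integral_ofReal]
    refine integral_congr fun x hx => ?_
    rw [uIcc_of_le zero_le_one] at hx
    exact ofReal_eq_cpow hx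
  apply Complex.ofReal_injective
  rw [hB, Complex.ofReal_div, Complex.ofReal_mul, ← Complex.Gamma_ofReal,
    ← Complex.Gamma_ofReal, ← Complex.Gamma_ofReal, Complex.ofReal_add, eq_div_iff hΓ, mul_comm,
    Complex.Gamma_mul_Gamma_eq_betaIntegral (by simpa) (by simpa)]

lemma integral_pos (ha : 0 < a) (hb : 0 < b) : 0 < ∫ x in (0:ℝ)..1, betaKernel a b x := by
  rw [integral_eq ha hb]
  have := Real.Gamma_pos_of_pos ha
  have := Real.Gamma_pos_of_pos hb
  have := Real.Gamma_pos_of_pos (add_pos ha hb)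
  positivity

lemma integral_id_mul_eq (ha : 0 < a) (hb : 0 < b) :
    ∫ x in (0:ℝ)..1, x * betaKernel a b x = a / (a + b) * ∫ x in (0:ℝ)..1, betaKernel a b x := by
  have hshift : ∫ x in (0:ℝ)..1, x * betaKernel a b x
      = ∫ x in (0:ℝ)..1, betaKernel (a + 1) b x := by
    refine integral_congr fun x hx => ?_
    rw [uIcc_of_le zero_le_one] at hx
    rcases hx.1.eq_or_lt with rfl | hx0
    · simp [betaKernel, Real.zero_rpow ha.ne']
    · rw [betaKernel, betaKernel, add_sub_cancel_right, Real.rpow_sub_one hx0.ne']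
      field_simp
  have hΓ : Real.Gamma (a + b) ≠ 0 := (Real.Gamma_pos_of_pos (by linarith)).ne'
  rw [hshift, integral_eq (by linarith) hb, integral_eq ha hb, Real.Gamma_add_one ha.ne',
    add_right_comm, Real.Gamma_add_one (by positivity)]
  field_simp

lemma hasDerivAt_rpow_mul_one_sub_rpow {x : ℝ} (hx : x ∈ Ioo (0:ℝ) 1) :
    HasDerivAt (fun u => u ^ a * (1 - u) ^ b) (betaKernel a b x * (a - (a + b) * x)) x := by
  have hx0 : x ≠ 0 := hx.1.ne'
  have hx1 : 1 - x ≠ 0 := (sub_pos.2 hx.2).ne'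
  refine ((Real.hasDerivAt_rpow_const (p := a) (Or.inl hx0)).mul
    (((hasDerivAt_id x).const_sub 1).rpow_const (p := b) (Or.inl hx1))).congr_deriv ?_
  rw [id, betaKernel, Real.rpow_sub_one hx0, Real.rpow_sub_one hx1]
  field_simp
  ring

lemma sub_integral_id_mul_eq (ha : 0 < a) (hb : 0 < b) {w : ℝ} (hw : w ∈ Icc (0:ℝ) 1) :
    a * (∫ x in (0:ℝ)..w, betaKernel a b x) - (a + b) * ∫ x in (0:ℝ)..w, x * betaKernel a b x
      = w ^ a * (1 - w) ^ b := by
  have hq : IntervalIntegrable (betaKernel a b) volume 0 w :=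
    (intervalIntegrable ha hb).mono_set
      (uIcc_subset_uIcc_left (by rwa [uIcc_of_le zero_le_one]))
  have hcont : Continuous fun u : ℝ => u ^ a * (1 - u) ^ b := by
    have := Real.continuous_rpow_const ha.le
    have := Real.continuous_rpow_const hb.le
    fun_prop
  have hFTC := integral_eq_sub_of_hasDerivAt_of_le hw.1 hcont.continuousOn
    (fun x hx => hasDerivAt_rpow_mul_one_sub_rpow ⟨hx.1, hx.2.trans_le hw.2⟩)
    (hq.mul_continuousOn (g := fun x => a - (a + b) * x) (by fun_prop))
  rw [Real.zero_rpow ha.ne', zero_mul, sub_zero] at hFTC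
  rw [← hFTC, ← intervalIntegral.integral_const_mul, ← intervalIntegral.integral_const_mul,
    ← intervalIntegral.integral_sub (hq.const_mul _)
      ((hq.continuousOn_mul (g := fun x => x) continuousOn_id).const_mul _)]
  exact integral_congr fun x _ => by ring

end betaKernel

lemma betaExp_eq {a b : ℝ} (ha : 0 < a) (hb : 0 < b) (h : ℝ → ℝ) :
    betaExp a b h
      = (∫ x in (0:ℝ)..1, betaKernel a b x * h x) / ∫ x in (0:ℝ)..1, betaKernel a b x := by
  rw [betaExp, ← integral_Ioc_eq_integral_Ioo, ← intervalIntegral.integral_of_le zero_le_one,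
    betaKernel.integral_eq ha hb, div_eq_inv_mul (∫ x in (0:ℝ)..1, betaKernel a b x * h x),
    inv_div, ← intervalIntegral.integral_const_mul]
  exact integral_congr fun x _ => by rw [betaKernel]; ring

lemma integral_betaKernel_mul_sub_betaExp {a b : ℝ} (ha : 0 < a) (hb : 0 < b) {h : ℝ → ℝ}
    (hh : IntervalIntegrable (fun x => betaKernel a b x * h x) volume 0 1) :
    ∫ x in (0:ℝ)..1, betaKernel a b x * (h x - betaExp a b h) = 0 := by
  simp only [mul_sub]
  rw [intervalIntegral.integral_sub hh ((betaKernel.intervalIntegrable ha hb).mul_const _),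
    intervalIntegral.integral_mul_const, betaExp_eq ha hb,
    mul_div_cancel₀ _ (betaKernel.integral_pos ha hb).ne', sub_self]

theorem abs_integral_betaKernel_mul_le {a b L : ℝ} (ha : 0 < a) (hb : 0 < b) {g : ℝ → ℝ}
    (hg : ∀ x ∈ Icc (0:ℝ) 1, ∀ y ∈ Icc (0:ℝ) 1, |g x - g y| ≤ L * |x - y|)
    (hmean : ∫ x in (0:ℝ)..1, betaKernel a b x * g x = 0) {w : ℝ} (hw : w ∈ Icc (0:ℝ) 1) :
    |∫ x in (0:ℝ)..w, betaKernel a b x * g x| ≤ L / (a + b) * (w ^ a * (1 - w) ^ b) := by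
  have key := integral_mul_abs_integral_mul_le (fun u hu => betaKernel.nonneg hu)
    (betaKernel.intervalIntegrable ha hb) hg hmean hw
  rw [betaKernel.integral_id_mul_eq ha hb] at key
  refine le_of_mul_le_mul_left (key.trans_eq ?_) (betaKernel.integral_pos ha hb)
  rw [← betaKernel.sub_integral_id_mul_eq ha hb hw]
  field_simp

/-- For `α, β > 0` and `h` Lipschitz with constant `L` on
`[0,1]`, the solution
`f(w) = w^{-α} (1-w)^{-β} ∫₀^w u^{α-1} (1-u)^{β-1} (h(u) - Bh) du`
of the Beta Stein equation satisfies `sup_{w ∈ (0,1)} |f(w)| ≤ 2L/(α+β)`. -/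
theorem stmt_13 (α β : ℝ) (hα : 0 < α) (hβ : 0 < β)
    (L : ℝ) (hL : 0 ≤ L)
    (h : ℝ → ℝ)
    (hLip : ∀ x ∈ Set.Icc (0 : ℝ) 1, ∀ y ∈ Set.Icc (0 : ℝ) 1,
      |h x - h y| ≤ L * |x - y|)
    (Bh : ℝ) (hBh : Bh = betaExp α β h)
    (f : ℝ → ℝ)
    (hfdef : ∀ w ∈ Set.Ioo (0 : ℝ) 1,
      f w = w ^ (-α) * (1 - w) ^ (-β)
        * ∫ u in (0 : ℝ)..w, u ^ (α - 1) * (1 - u) ^ (β - 1) * (h u - Bh)) :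
    ∀ w ∈ Set.Ioo (0 : ℝ) 1, |f w| ≤ 2 * L / (α + β) := by
  intro w hw
  have hmean : ∫ x in (0:ℝ)..1, betaKernel α β x * (h x - Bh) = 0 := by
    rw [hBh]
    refine integral_betaKernel_mul_sub_betaExp hα hβ
      ((betaKernel.intervalIntegrable hα hβ).mul_continuousOn ?_)
    rw [uIcc_of_le zero_le_one]
    exact continuousOn_of_abs_sub_le hLip
  have hI : |∫ u in (0 : ℝ)..w, betaKernel α β u * (h u - Bh)|
      ≤ L / (α + β) * (w ^ α * (1 - w) ^ β) :=
    abs_integral_betaKernel_mul_le hα hβ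
      (fun x hx y hy => by simpa only [sub_sub_sub_cancel_right] using hLip x hx y hy)
      hmean (Ioo_subset_Icc_self hw)
  have hw₀ : 0 < w := hw.1
  have hw₁ : 0 < 1 - w := sub_pos.2 hw.2
  rw [hfdef w hw, abs_mul, abs_of_nonneg (by positivity)]
  calc w ^ (-α) * (1 - w) ^ (-β) * |∫ u in (0 : ℝ)..w, betaKernel α β u * (h u - Bh)|
      ≤ w ^ (-α) * (1 - w) ^ (-β) * (L / (α + β) * (w ^ α * (1 - w) ^ β)) := by gcongr
    _ = L / (α + β) := by
      rw [Real.rpow_neg hw₀.le, Real.rpow_neg hw₁.le]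
      field_simp
    _ ≤ 2 * L / (α + β) := by gcongr; linarith
end

section
/- Let n ≥ 1 and let K be a random variable on {0,1,…,n} with P(K = k) = u_{2k} u_{2n−2k}, where u_{2m} = 2^{−2m} C(2m, m); that is, 2K is distributed as the last return time to zero L_{2n} of a simple symmetric random walk of length 2n. Set W = K/n. Then for every function f : ℝ → ℝ with f(−1/n) = 0, E[ nW(1 − W + 1/(2n)) ( f(W) − f(W − 1/n) ) + (1/2 − W) f(W) ] = 0. -/
/-- `u_{2m} = 2^{-2m} C(2m, m)`, the probability that a simple symmetric
random walk returns to zero at time `2m`. -/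
noncomputable def u (m : ℕ) : ℝ := ((2 * m).choose m : ℝ) / 4 ^ m

/-- The mass function of `K = L_{2n}/2`, where `L_{2n}` is the last return
time to zero of a simple symmetric random walk of length `2n`:
`P(K = k) = u_{2k} u_{2n-2k}` for `k = 0, 1, …, n`. -/
noncomputable def arcPmf (n k : ℕ) : ℝ := u k * u (n - k)

lemma u_succ (m : ℕ) : 2 * ((m : ℝ) + 1) * u (m + 1) = (2 * m + 1) * u m := by
  have h := Nat.succ_mul_centralBinom_succ m
  unfold Nat.centralBinom at h
  have h' : ((m : ℝ) + 1) * ((2 * (m + 1)).choose (m + 1) : ℝ)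
      = 2 * (2 * (m : ℝ) + 1) * ((2 * m).choose m : ℝ) := by
    exact_mod_cast congrArg (Nat.cast (R := ℝ)) h
  unfold u
  have h4 : (0:ℝ) < 4 ^ m := by positivity
  field_simp
  ring_nf
  ring_nf at h'
  nlinarith [h', h4]

lemma key' (k j : ℕ) : u k * u (j + 1) * (((j : ℝ) + 1) * (2 * k + 1))
    = u (k + 1) * u j * (((k : ℝ) + 1) * (2 * j + 1)) := by
  have A := u_succ k
  have B := u_succ j
  linear_combination (u k * (2 * (k:ℝ) + 1) / 2) * B - (u j * (2 * (j:ℝ) + 1) / 2) * A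

/-- With `K` distributed as `L_{2n}/2` and `W = K/n`, for every
`f : ℝ → ℝ` with `f(-1/n) = 0`,
`E[nW(1 - W + 1/(2n))(f(W) - f(W - 1/n)) + (1/2 - W) f(W)] = 0`. -/
theorem stmt_17 (n : ℕ) (hn : 1 ≤ n) (f : ℝ → ℝ) (hf : f (-(1 / (n : ℝ))) = 0) :
    ∑ k ∈ Finset.range (n + 1), arcPmf n k *
      ((n : ℝ) * ((k : ℝ) / n) * (1 - (k : ℝ) / n + 1 / (2 * (n : ℝ)))
          * (f ((k : ℝ) / n) - f ((k : ℝ) / n - 1 / n))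
        + (1 / 2 - (k : ℝ) / n) * f ((k : ℝ) / n)) = 0 := by
  have hn0 : (n : ℝ) ≠ 0 := Nat.cast_ne_zero.mpr (by omega)
  set T : ℕ → ℝ := fun k =>
    arcPmf n k * ((n : ℝ) * ((k : ℝ) / n) * (1 - (k : ℝ) / n + 1 / (2 * (n : ℝ))))
      * f ((k : ℝ) / n - 1 / n) with hT
  rw [Finset.sum_range_succ]
  have h1 : ∑ k ∈ Finset.range n, (arcPmf n k *
      ((n : ℝ) * ((k : ℝ) / n) * (1 - (k : ℝ) / n + 1 / (2 * (n : ℝ)))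
          * (f ((k : ℝ) / n) - f ((k : ℝ) / n - 1 / n))
        + (1 / 2 - (k : ℝ) / n) * f ((k : ℝ) / n)))
      = ∑ k ∈ Finset.range n, (T (k + 1) - T k) := by
    refine Finset.sum_congr rfl fun k hk => ?_
    have hkn : k < n := Finset.mem_range.mp hk
    obtain ⟨j, hj⟩ : ∃ j, n = k + j + 1 := ⟨n - k - 1, by omega⟩
    have key : arcPmf n k * ((n : ℝ) * ((k : ℝ) / n) * (1 - (k : ℝ) / n + 1 / (2 * n))
          + (1 / 2 - (k : ℝ) / n))
        = arcPmf n (k + 1) * ((n : ℝ) * (((k : ℝ) + 1) / n)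
            * (1 - ((k : ℝ) + 1) / n + 1 / (2 * n))) := by
      have e1 : n - k = j + 1 := by omega
      have e2 : n - (k + 1) = j := by omega
      have e3 : (n : ℝ) = (k : ℝ) + j + 1 := by push_cast [hj]; ring
      have hne : (k : ℝ) + j + 1 ≠ 0 := by positivity
      have L : (n:ℝ) * ((k:ℝ)/n) * (1 - (k:ℝ)/n + 1/(2*n)) + (1/2 - (k:ℝ)/n)
          = (((j:ℝ)+1) * (2*(k:ℝ)+1)) / (2*n) := by
        rw [e3]; field_simp; ring
      have R : (n:ℝ) * (((k:ℝ)+1)/n) * (1 - ((k:ℝ)+1)/n + 1/(2*n))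
          = (((k:ℝ)+1) * (2*(j:ℝ)+1)) / (2*n) := by
        rw [e3]; field_simp; ring
      unfold arcPmf
      rw [e1, e2, L, R, e3]
      linear_combination ((2*((k:ℝ)+(j:ℝ)+1))⁻¹) * key' k j
    have hx : ((k : ℝ) + 1) / n - 1 / n = (k : ℝ) / n := by ring
    simp only [hT]
    push_cast
    rw [hx]
    linear_combination f ((k : ℝ) / n) * key
  rw [h1, Finset.sum_range_sub]
  have hT0 : T 0 = 0 := by
    have h0 : (0:ℝ) / n - 1 / n = -(1 / (n:ℝ)) := by ring
    simp only [hT, Nat.cast_zero, h0, hf]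
    ring
  have hlast : arcPmf n n *
      ((n : ℝ) * ((n : ℝ) / n) * (1 - (n : ℝ) / n + 1 / (2 * (n : ℝ)))
          * (f ((n : ℝ) / n) - f ((n : ℝ) / n - 1 / n))
        + (1 / 2 - (n : ℝ) / n) * f ((n : ℝ) / n)) = - T n := by
    simp only [hT]
    have h1 : (n : ℝ) / n = 1 := div_self hn0
    rw [h1]
    field_simp
    ring
  rw [hlast, hT0]
  ring
end

section
/- Let n ≥ 1 and let K be a random variable on {0,1,…,n} with P(K = k) = u_{2k} u_{2n−2k}, where u_{2m} = 2^{−2m} C(2m, m), and set W = K/n. Then E[W] = 1/2 and E[W²] = 3/8 + 1/(8n). Consequently, if Z has the Arcsine distribution B(1/2,1/2), so that E[Z²] = 3/8, then for the 1-Lipschitz function h(w) = w²/2 on [0,1] one has E h(W) − E h(Z) = 1/(16n), and hence d_W(W, Z) ≥ 1/(16n); the O(1/n) rate of the Arcsine approximation cannot be improved. -/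
open MeasureTheory

/-!
The moments of `K` come from two properties of the weights. The symmetry `k ↦ n - k` gives
`2 E[K] = n`, and `(k + 1) u_{2k+2} = (k + 1/2) u_{2k}` relates the law for `n + 1` to the law
for `n`: `E_{n+1}[K f(K)] = E_n[(K + 1/2) f(K + 1)]`. Together they give total mass `1`, and then
`E[K²] = (3n² + n)/8` by induction. On the Arcsine side the Beta integral gives
`E[Z²] = Γ(1) Γ(5/2) / (Γ(1/2) Γ(3)) = 3/8`. Since `W` and `Z` take values in `[0,1]`, where
`h(w) = w²/2`, the gap `E h(W) - E h(Z)` is half the difference of the second moments, `1/(16n)`.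
-/

open Finset Set

lemma succ_mul_u_succ (k : ℕ) : ((k : ℝ) + 1) * u (k + 1) = (k + 1 / 2) * u k := by
  have h := congrArg (Nat.cast : ℕ → ℝ) (Nat.succ_mul_centralBinom_succ k)
  simp only [Nat.centralBinom] at h
  push_cast at h
  simp only [u, pow_succ]
  field_simp
  linear_combination 2 * h

lemma arcPmf_symm {n k : ℕ} (hk : k ≤ n) : arcPmf n (n - k) = arcPmf n k := by
  rw [arcPmf, arcPmf, Nat.sub_sub_self hk, mul_comm]

noncomputable def arcMoment (p n : ℕ) : ℝ := ∑ k ∈ range (n + 1), (k : ℝ) ^ p * arcPmf n k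

lemma two_mul_arcMoment_one (n : ℕ) : 2 * arcMoment 1 n = n * arcMoment 0 n := by
  have hrefl : ∑ k ∈ range (n + 1), ((n : ℝ) - k) * arcPmf n k = arcMoment 1 n := by
    rw [arcMoment, ← sum_range_reflect]
    refine sum_congr rfl fun k hk => ?_
    have hk : k ≤ n := Nat.lt_succ_iff.mp (mem_range.mp hk)
    rw [Nat.add_sub_cancel, arcPmf_symm hk, Nat.cast_sub hk, pow_one]
    ring
  rw [two_mul]
  nth_rewrite 2 [← hrefl]
  rw [arcMoment, arcMoment, ← sum_add_distrib, mul_sum]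
  exact sum_congr rfl fun k _ => by ring

lemma sum_mul_arcPmf_succ (n : ℕ) (g : ℕ → ℝ) :
    ∑ k ∈ range (n + 1 + 1), (k : ℝ) * g k * arcPmf (n + 1) k
      = ∑ j ∈ range (n + 1), ((j : ℝ) + 1 / 2) * g (j + 1) * arcPmf n j := by
  rw [sum_range_succ']
  simp only [Nat.cast_zero, zero_mul, add_zero]
  refine sum_congr rfl fun j _ => ?_
  rw [arcPmf, arcPmf, Nat.add_sub_add_right]
  push_cast
  linear_combination (g (j + 1) * u (n - j)) * succ_mul_u_succ j

lemma arcMoment_one_succ (n : ℕ) : arcMoment 1 (n + 1) = arcMoment 1 n + arcMoment 0 n / 2 := by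
  have h := sum_mul_arcPmf_succ n fun _ => 1
  simp only [mul_one] at h
  rw [arcMoment, arcMoment, arcMoment, sum_div, ← sum_add_distrib]
  simp only [pow_one, pow_zero, one_mul]
  rw [h]
  exact sum_congr rfl fun j _ => by ring

lemma arcMoment_two_succ (n : ℕ) :
    arcMoment 2 (n + 1) = arcMoment 2 n + 3 / 2 * arcMoment 1 n + arcMoment 0 n / 2 := by
  have h := sum_mul_arcPmf_succ n fun k => k
  rw [arcMoment, arcMoment, arcMoment, arcMoment, mul_sum, sum_div, ← sum_add_distrib,
    ← sum_add_distrib]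
  simp only [← sq, Nat.cast_add, Nat.cast_one] at h
  rw [h]
  exact sum_congr rfl fun j _ => by ring

lemma arcMoment_zero (n : ℕ) : arcMoment 0 n = 1 := by
  induction n with
  | zero => simp [arcMoment, arcPmf, u]
  | succ n ih =>
    have h := two_mul_arcMoment_one (n + 1)
    rw [arcMoment_one_succ, mul_add, two_mul_arcMoment_one, ih] at h
    push_cast at h
    have hn : (n : ℝ) + 1 ≠ 0 := by positivity
    exact mul_left_cancel₀ hn (by linarith : ((n : ℝ) + 1) * arcMoment 0 (n + 1) = _ * 1)

lemma arcMoment_one (n : ℕ) : arcMoment 1 n = n / 2 := by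
  have h := two_mul_arcMoment_one n
  rw [arcMoment_zero] at h
  linarith

lemma arcMoment_two (n : ℕ) : arcMoment 2 n = (3 * n ^ 2 + n) / 8 := by
  induction n with
  | zero => simp [arcMoment]
  | succ n ih =>
    rw [arcMoment_two_succ, ih, arcMoment_one, arcMoment_zero]
    push_cast
    ring

lemma sum_arcPmf_mul_div_pow (p n : ℕ) :
    ∑ k ∈ range (n + 1), arcPmf n k * ((k : ℝ) / n) ^ p = arcMoment p n / n ^ p := by
  rw [arcMoment, sum_div]
  exact sum_congr rfl fun k _ => by ring

lemma sum_arcPmf_mul_div {n : ℕ} (hn : n ≠ 0) :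
    ∑ k ∈ range (n + 1), arcPmf n k * ((k : ℝ) / n) = 1 / 2 := by
  have h := sum_arcPmf_mul_div_pow 1 n
  simp only [pow_one, arcMoment_one] at h
  rw [h]
  field_simp

lemma sum_arcPmf_mul_div_sq {n : ℕ} (hn : n ≠ 0) :
    ∑ k ∈ range (n + 1), arcPmf n k * ((k : ℝ) / n) ^ 2 = 3 / 8 + 1 / (8 * (n : ℝ)) := by
  rw [sum_arcPmf_mul_div_pow, arcMoment_two]
  field_simp

lemma sum_arcPmf_mul_congr {n : ℕ} {f g : ℝ → ℝ} (hfg : EqOn f g (Icc 0 1)) :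
    ∑ k ∈ range (n + 1), arcPmf n k * f ((k : ℝ) / n)
      = ∑ k ∈ range (n + 1), arcPmf n k * g ((k : ℝ) / n) := by
  refine sum_congr rfl fun k hk => ?_
  have hkn : (k : ℝ) ≤ n := by exact_mod_cast Nat.lt_succ_iff.mp (mem_range.mp hk)
  rw [hfg ⟨by positivity, div_le_one_of_le₀ hkn (Nat.cast_nonneg n)⟩]

lemma integral_rpow_mul_one_sub_rpow {a b : ℝ} (ha : 0 < a) (hb : 0 < b) :
    ∫ x in (0 : ℝ)..1, x ^ (a - 1) * (1 - x) ^ (b - 1)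
      = Real.Gamma a * Real.Gamma b / Real.Gamma (a + b) := by
  have hB : Complex.betaIntegral a b
      = ((∫ x in (0 : ℝ)..1, x ^ (a - 1) * (1 - x) ^ (b - 1) : ℝ) : ℂ) := by
    rw [Complex.betaIntegral, ← intervalIntegral.integral_ofReal]
    refine intervalIntegral.integral_congr fun x hx => ?_
    rw [Set.uIcc_of_le zero_le_one] at hx
    push_cast
    rw [Complex.ofReal_cpow hx.1, Complex.ofReal_cpow (sub_nonneg.mpr hx.2)]
    push_cast
    rfl
  have h := Complex.Gamma_mul_Gamma_eq_betaIntegral (s := a) (t := b) (by simpa) (by simpa)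
  rw [hB, ← Complex.ofReal_add] at h
  simp only [Complex.Gamma_ofReal] at h
  have h' : Real.Gamma a * Real.Gamma b
      = Real.Gamma (a + b) * ∫ x in (0 : ℝ)..1, x ^ (a - 1) * (1 - x) ^ (b - 1) := by
    exact_mod_cast h
  rw [eq_div_iff (Real.Gamma_pos_of_pos (add_pos ha hb)).ne', h', mul_comm]

lemma betaExp_congr {a b : ℝ} {h g : ℝ → ℝ} (hfg : EqOn h g (Ioo 0 1)) :
    betaExp a b h = betaExp a b g :=
  setIntegral_congr_fun measurableSet_Ioo fun x hx => by rw [hfg hx]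

lemma betaExp_div_const (a b : ℝ) (h : ℝ → ℝ) (c : ℝ) :
    betaExp a b (fun x => h x / c) = betaExp a b h / c := by
  simp only [betaExp, mul_div_assoc', integral_div]

lemma betaExp_pow {a b : ℝ} (ha : 0 < a) (hb : 0 < b) (m : ℕ) :
    betaExp a b (fun x => x ^ m)
      = Real.Gamma (a + b) * Real.Gamma (a + m) / (Real.Gamma a * Real.Gamma (a + b + m)) := by
  have hcongr : EqOn
      (fun x => Real.Gamma (a + b) / (Real.Gamma a * Real.Gamma b)
        * x ^ (a - 1) * (1 - x) ^ (b - 1) * x ^ m)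
      (fun x => Real.Gamma (a + b) / (Real.Gamma a * Real.Gamma b)
        * (x ^ (a + m - 1) * (1 - x) ^ (b - 1))) (Ioo 0 1) := fun x hx => by
    simp only
    rw [show a + m - 1 = a - 1 + m by ring, Real.rpow_add_natCast hx.1.ne']
    ring
  rw [betaExp, setIntegral_congr_fun measurableSet_Ioo hcongr, integral_const_mul,
    integral_Ioc_eq_integral_Ioo.symm, ← intervalIntegral.integral_of_le zero_le_one,
    integral_rpow_mul_one_sub_rpow (by positivity) hb, add_right_comm]
  have := Real.Gamma_pos_of_pos ha
  have := Real.Gamma_pos_of_pos hb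
  field_simp

lemma betaExp_arcsine_sq : betaExp (1 / 2) (1 / 2) (fun x => x ^ 2) = 3 / 8 := by
  have h1 : Real.Gamma (1 / 2 + 1) = 1 / 2 * Real.Gamma (1 / 2) := Real.Gamma_add_one (by norm_num)
  have h2 : Real.Gamma (1 / 2 + 1 + 1) = (1 / 2 + 1) * Real.Gamma (1 / 2 + 1) :=
    Real.Gamma_add_one (by norm_num)
  rw [betaExp_pow (by norm_num) (by norm_num)]
  norm_num at h1 h2 ⊢
  rw [h2, h1]
  have := Real.Gamma_pos_of_pos (by norm_num : (0 : ℝ) < 1 / 2)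
  field_simp
  norm_num

lemma lipschitzOnWith_sq_div_two : LipschitzOnWith 1 (fun t : ℝ => t ^ 2 / 2) (Icc 0 1) := by
  refine LipschitzOnWith.of_dist_le_mul fun s hs t ht => ?_
  rw [Real.dist_eq, Real.dist_eq, NNReal.coe_one, one_mul,
    show s ^ 2 / 2 - t ^ 2 / 2 = (s - t) * ((s + t) / 2) by ring, abs_mul,
    abs_of_nonneg (by linarith [hs.1, ht.1] : 0 ≤ (s + t) / 2)]
  exact mul_le_of_le_one_right (abs_nonneg _) (by linarith [hs.2, ht.2])

lemma lipschitzWith_clamp_sq_div_two :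
    LipschitzWith 1 (fun x : ℝ => (min (max x 0) 1) ^ 2 / 2) := by
  have hclamp : LipschitzWith 1 (fun x : ℝ => min (max x 0) 1) :=
    (LipschitzWith.id.max_const 0).min_const 1
  rw [← lipschitzOnWith_univ, ← one_mul (1 : NNReal)]
  exact lipschitzOnWith_sq_div_two.comp (hclamp.lipschitzOnWith (s := univ))
    fun x _ => ⟨le_min (le_max_right _ _) zero_le_one, min_le_right _ _⟩

/-- With `K` distributed as `L_{2n}/2` and `W = K/n`:
`E[W] = 1/2`, `E[W²] = 3/8 + 1/(8n)`; for the `1`-Lipschitz function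
`h(w) = w²/2` on `[0,1]` (extended by clamping to a `1`-Lipschitz function
on ℝ) and `Z` Arcsine distributed, `E h(W) - E h(Z) = 1/(16n)`; hence
`d_W(W, Z) ≥ 1/(16n)` (there is a `1`-Lipschitz test function attaining at
least this value), so the `O(1/n)` rate cannot be improved. -/
theorem stmt_19 (n : ℕ) (hn : 1 ≤ n)
    (h : ℝ → ℝ) (hdef : ∀ x : ℝ, h x = (min (max x 0) 1) ^ 2 / 2) :
    (∑ k ∈ Finset.range (n + 1), arcPmf n k * ((k : ℝ) / n) = 1 / 2) ∧
    (∑ k ∈ Finset.range (n + 1), arcPmf n k * ((k : ℝ) / n) ^ 2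
        = 3 / 8 + 1 / (8 * (n : ℝ))) ∧
    LipschitzWith 1 h ∧
    (∑ k ∈ Finset.range (n + 1), arcPmf n k * h ((k : ℝ) / n)
        - betaExp (1 / 2) (1 / 2) h = 1 / (16 * (n : ℝ))) ∧
    (∃ h₀ : ℝ → ℝ, LipschitzWith 1 h₀ ∧
      1 / (16 * (n : ℝ))
        ≤ |∑ k ∈ Finset.range (n + 1), arcPmf n k * h₀ ((k : ℝ) / n)
            - betaExp (1 / 2) (1 / 2) h₀|) := by
  have hn0 : n ≠ 0 := by omega
  have hlip : LipschitzWith 1 h := funext hdef ▸ lipschitzWith_clamp_sq_div_two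
  have hId : EqOn h (fun x => x ^ 2 / 2) (Icc 0 1) := fun x hx => by
    rw [hdef, max_eq_left hx.1, min_eq_left hx.2]
  have hW : ∑ k ∈ range (n + 1), arcPmf n k * h ((k : ℝ) / n)
      = (3 / 8 + 1 / (8 * (n : ℝ))) / 2 := by
    rw [sum_arcPmf_mul_congr hId, ← sum_arcPmf_mul_div_sq hn0, sum_div]
    simp only [mul_div_assoc]
  have hZ : betaExp (1 / 2) (1 / 2) h = 3 / 8 / 2 := by
    rw [betaExp_congr (hId.mono Ioo_subset_Icc_self), betaExp_div_const, betaExp_arcsine_sq]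
  have hgap : ∑ k ∈ range (n + 1), arcPmf n k * h ((k : ℝ) / n)
      - betaExp (1 / 2) (1 / 2) h = 1 / (16 * (n : ℝ)) := by
    rw [hW, hZ]
    ring
  refine ⟨sum_arcPmf_mul_div hn0, sum_arcPmf_mul_div_sq hn0, hlip, hgap, h, hlip, ?_⟩
  rw [hgap, abs_of_pos (by positivity)]
end
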